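/- arXiv:math/0606605 — 6 statements merged into one kernel-verified Lean document; each statement's English description precedes it below -/
import Mathlib

section
/- Let G = ⊕_{i=1}^{s} G_i be a finite abelian p-group with G_i homocyclic of exponent p^{n_i} and rank r_i, where n_1 < ⋯ < n_s. Then the Jacobson radical J of End(G), represented as a matrix ring (E_{ij}) with E_{ij} = Hom(G_i, G_j), satisfies J_{ij} = E_{ij} for i ≠ j and J_{ii} = p·E_{ii}. -/
/-!
A map `G_i → G_j` with `n_i < n_j` lands in `p G_j`, since `p ^ n_i` kills `G_i`. Hence, if every
diagonal block `f_ii` has image in `p G_i`, so does every diagonal block of `y * f`; such an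
endomorphism `h` moves the filtration `{x | p ∣ x_j for all j ≥ m}` one step down, so
`h ^ (s + 1)` maps `G` into `p G`, `h` is nilpotent, and `1 + y * f` is a unit for every `y`.
Conversely, if a coordinate `c` of some `f_ii v` is a unit of `ZMod (p ^ n_i)`, the rank-one map
`x ↦ c⁻¹ x_{ik} v` is a `y` with `y (f v) = v`; if `f` is in the radical, `1 - y * f` is
invertible, so `v = 0` and `c = 0` after all.
-/

theorem Pi.natCast_dvd_iff {ι : Type*} {R : ι → Type*} [∀ i, Semiring (R i)] {k : ℕ}
    {x : ∀ i, R i} : (k : ∀ i, R i) ∣ x ↔ ∀ i, (k : R i) ∣ x i := by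
  refine ⟨fun ⟨w, hw⟩ i => ⟨w i, congrFun hw i⟩, fun h => ?_⟩
  choose w hw using h
  exact ⟨w, funext hw⟩

theorem natCast_dvd_map {R S F : Type*} [Semiring R] [Semiring S] [FunLike F R S]
    [AddMonoidHomClass F R S] (φ : F) {k : ℕ} {x : R} (hx : (k : R) ∣ x) : (k : S) ∣ φ x := by
  obtain ⟨w, rfl⟩ := hx
  exact ⟨φ w, by rw [← nsmul_eq_mul, map_nsmul, nsmul_eq_mul]⟩

theorem ZMod.isUnit_or_natCast_dvd {p : ℕ} (hp : p.Prime) (k : ℕ) (c : ZMod (p ^ k)) :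
    IsUnit c ∨ (p : ZMod (p ^ k)) ∣ c := by
  have : NeZero (p ^ k) := ⟨pow_ne_zero _ hp.ne_zero⟩
  rw [← ZMod.natCast_zmod_val c]
  by_cases hpc : p ∣ c.val
  · exact Or.inr (Nat.cast_dvd_cast hpc)
  · exact Or.inl ((ZMod.isUnit_iff_coprime _ _).mpr
      (Nat.Coprime.pow_right k ((hp.coprime_iff_not_dvd.mpr hpc).symm)))

theorem ZMod.natCast_dvd_of_pow_nsmul_eq_zero {p a b : ℕ} (hp : p ≠ 0) (hab : a < b)
    {x : ZMod (p ^ b)} (hx : p ^ a • x = 0) : (p : ZMod (p ^ b)) ∣ x := by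
  have : NeZero (p ^ b) := ⟨pow_ne_zero _ hp⟩
  rw [← ZMod.natCast_zmod_val x, nsmul_eq_mul, ← Nat.cast_mul, ZMod.natCast_eq_zero_iff] at hx
  have hval : p ^ (b - a) ∣ x.val := by
    rwa [← Nat.mul_dvd_mul_iff_left (pow_pos (Nat.pos_of_ne_zero hp) a), ← pow_add,
      Nat.add_sub_cancel' hab.le]
  rw [← ZMod.natCast_zmod_val x]
  exact Nat.cast_dvd_cast ((dvd_pow_self p (Nat.sub_ne_zero_of_lt hab)).trans hval)

theorem natCast_dvd_map_of_lt {ι κ F : Type*} {p a b : ℕ} (hp : p ≠ 0) (hab : a < b)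
    [FunLike F (ι → ZMod (p ^ a)) (κ → ZMod (p ^ b))]
    [AddMonoidHomClass F (ι → ZMod (p ^ a)) (κ → ZMod (p ^ b))] (φ : F) (v : ι → ZMod (p ^ a)) :
    (p : κ → ZMod (p ^ b)) ∣ φ v := by
  have hv : p ^ a • v = 0 := by
    ext l
    rw [Pi.smul_apply, nsmul_eq_mul, ZMod.natCast_self, zero_mul, Pi.zero_apply]
  refine Pi.natCast_dvd_iff.mpr fun l => ZMod.natCast_dvd_of_pow_nsmul_eq_zero hp hab ?_
  rw [← Pi.smul_apply, ← map_nsmul, hv, map_zero, Pi.zero_apply]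

theorem LinearMap.exists_eq_natCast_smul {ι N : Type*} [Fintype ι] [DecidableEq ι] {q : ℕ}
    [AddCommGroup N] [Module (ZMod q) N] (φ : (ι → ZMod q) →ₗ[ℤ] N) {c : ℕ}
    (hφ : ∀ l, ∃ w, φ (Pi.single l 1) = c • w) : ∃ g : (ι → ZMod q) →ₗ[ℤ] N, φ = c • g := by
  choose w hw using hφ
  refine ⟨∑ l, (LinearMap.proj l : (ι → ZMod q) →ₗ[ℤ] ZMod q).smulRight (w l), ?_⟩
  refine LinearMap.pi_ext fun l a => ?_
  rw [← mul_one a, ← smul_eq_mul, Pi.single_smul', ZMod.map_smul, hw]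
  simp [Pi.single_apply, smul_comm a c]

theorem Module.End.pow_eq_zero_of_forall_natCast_dvd {R M : Type*} [Semiring R] [Semiring M]
    [Module R M] {h : Module.End R M} {c K : ℕ} (hc : (c : M) ^ K = 0)
    (hh : ∀ x, (c : M) ∣ h x) : h ^ K = 0 := by
  have hpow : ∀ k x, (c : M) ^ k ∣ (h ^ k) x := by
    intro k
    induction k with
    | zero => exact fun x => by rw [pow_zero]; exact one_dvd _
    | succ k ih =>
      intro x
      obtain ⟨w, hw⟩ := ih x
      have hmul : h ((c : M) ^ k * w) = (c : M) ^ k * h w := by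
        rw [← Nat.cast_pow, ← nsmul_eq_mul, map_nsmul, nsmul_eq_mul]
      rw [pow_succ' h, Module.End.mul_apply, hw, hmul, pow_succ]
      exact mul_dvd_mul_left _ (hh w)
  ext x
  obtain ⟨w, hw⟩ := hpow K x
  rw [hw, hc, zero_mul, LinearMap.zero_apply]

theorem TwoSidedIdeal.mem_jacobson_bot_of_forall_isNilpotent_mul {R : Type*} [Ring R] {x : R}
    (hx : ∀ y, IsNilpotent (y * x)) : x ∈ (⊥ : TwoSidedIdeal R).jacobson := by
  refine mem_jacobson_iff.mpr fun y => ?_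
  obtain ⟨u, hu⟩ := (hx y).isUnit_add_one
  refine ⟨↑u⁻¹, ?_⟩
  rw [mem_bot, mul_assoc, ← mul_add_one, ← hu, Units.inv_mul, sub_self]

theorem Module.End.eq_zero_of_apply_apply_eq_self_of_mem_jacobson {R M : Type*} [Semiring R]
    [AddCommGroup M] [Module R M] {f : Module.End R M}
    (hf : f ∈ (⊥ : TwoSidedIdeal (Module.End R M)).jacobson) {y : Module.End R M} {v : M}
    (hv : y (f v) = v) : v = 0 := by
  obtain ⟨z, hz⟩ := TwoSidedIdeal.mem_jacobson_iff.mp hf (-y)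
  have hz : z * (1 - y * f) = 1 := by
    rw [TwoSidedIdeal.mem_bot] at hz
    rw [← sub_eq_zero, ← hz]
    noncomm_ring
  calc v = (z * (1 - y * f)) v := by rw [hz, Module.End.one_apply]
    _ = 0 := by simp [hv]

namespace HomocyclicSum

variable {p s : ℕ} {n r : Fin (s + 1) → ℕ}

abbrev G (p : ℕ) (n r : Fin (s + 1) → ℕ) (i : Fin (s + 1)) : Type :=
  Fin (r i) → ZMod (p ^ n i)

def block (h : Module.End ℤ (∀ i, G p n r i)) (i j : Fin (s + 1)) : G p n r i →ₗ[ℤ] G p n r j :=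
  LinearMap.proj j ∘ₗ h ∘ₗ LinearMap.single ℤ (G p n r) i

theorem apply_eq_sum_block (h : Module.End ℤ (∀ i, G p n r i)) (x : ∀ i, G p n r i)
    (j : Fin (s + 1)) : h x j = ∑ i, block h i j (x i) := by
  conv_lhs => rw [← Finset.univ_sum_single x]
  simp [block]

def DiagonalDvd (p : ℕ) (h : Module.End ℤ (∀ i, G p n r i)) : Prop :=
  ∀ i (v : G p n r i), (p : G p n r i) ∣ block h i i v

theorem diagonalDvd_iff_forall_exists_block_eq_smul (h : Module.End ℤ (∀ i, G p n r i)) :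
    DiagonalDvd p h ↔ ∀ i, ∃ g : G p n r i →ₗ[ℤ] G p n r i, block h i i = p • g := by
  refine ⟨fun hh i => (block h i i).exists_eq_natCast_smul fun l => ?_, fun hh i v => ?_⟩
  · obtain ⟨w, hw⟩ := hh i (Pi.single l 1)
    exact ⟨w, by rw [hw, nsmul_eq_mul]⟩
  · obtain ⟨g, hg⟩ := hh i
    exact ⟨g v, by rw [hg, LinearMap.smul_apply, nsmul_eq_mul]⟩

theorem diagonalDvd_of_mem_jacobson (hp : p.Prime) {f : Module.End ℤ (∀ i, G p n r i)}
    (hf : f ∈ (⊥ : TwoSidedIdeal (Module.End ℤ (∀ i, G p n r i))).jacobson) :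
    DiagonalDvd p f := by
  intro i v
  refine Pi.natCast_dvd_iff.mpr fun k => ?_
  rcases ZMod.isUnit_or_natCast_dvd hp (n i) (block f i i v k) with ⟨u, hu⟩ | hdvd
  · let y : Module.End ℤ (∀ i, G p n r i) := LinearMap.single ℤ (G p n r) i ∘ₗ
      (LinearMap.mulLeft ℤ (↑u⁻¹ : ZMod (p ^ n i)) ∘ₗ LinearMap.proj k ∘ₗ
        LinearMap.proj i).smulRight v
    have hv : y (f (Pi.single i v)) = Pi.single i v := by
      have hc : f (Pi.single i v) i k = u := hu.symm
      simp [y, hc]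
    have hv0 : v = 0 := by
      simpa using Module.End.eq_zero_of_apply_apply_eq_self_of_mem_jacobson hf hv
    simp [hv0]
  · exact hdvd

theorem natCast_dvd_block_apply_of_lt (hp : p ≠ 0) (hn : StrictMono n)
    (h : Module.End ℤ (∀ i, G p n r i)) {i j : Fin (s + 1)} (hij : i < j) (v : G p n r i) :
    (p : G p n r j) ∣ block h i j v :=
  natCast_dvd_map_of_lt hp (hn hij) (block h i j) v

theorem natCast_dvd_apply (hp : p ≠ 0) (hn : StrictMono n) (h : Module.End ℤ (∀ i, G p n r i))
    {x : ∀ i, G p n r i} {j : Fin (s + 1)} (hjj : (p : G p n r j) ∣ block h j j (x j))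
    (hx : ∀ i, j < i → (p : G p n r i) ∣ x i) : (p : G p n r j) ∣ h x j := by
  rw [apply_eq_sum_block]
  refine Finset.dvd_sum fun i _ => ?_
  rcases lt_trichotomy i j with hij | rfl | hji
  · exact natCast_dvd_block_apply_of_lt hp hn h hij (x i)
  · exact hjj
  · exact natCast_dvd_map (block h i j) (hx i hji)

theorem DiagonalDvd.mul_left (hp : p ≠ 0) (hn : StrictMono n)
    {f : Module.End ℤ (∀ i, G p n r i)} (hf : DiagonalDvd p f)
    (y : Module.End ℤ (∀ i, G p n r i)) :
    DiagonalDvd p (y * f) :=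
  fun i v => natCast_dvd_apply hp hn y (natCast_dvd_map (block y i i) (hf i v))
    fun _ hij => natCast_dvd_block_apply_of_lt hp hn f hij v

theorem DiagonalDvd.natCast_dvd_pow_apply (hp : p ≠ 0) (hn : StrictMono n)
    {h : Module.End ℤ (∀ i, G p n r i)} (hh : DiagonalDvd p h) (x : ∀ i, G p n r i) :
    (p : ∀ i, G p n r i) ∣ (h ^ (s + 1)) x := by
  suffices H : ∀ m (x : ∀ i, G p n r i),
      (∀ i : Fin (s + 1), m ≤ (i : ℕ) → (p : G p n r i) ∣ x i) →
      ∀ j, (p : G p n r j) ∣ (h ^ m) x j from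
    Pi.natCast_dvd_iff.mpr (H (s + 1) x fun i hi => absurd i.isLt (by omega))
  intro m
  induction m with
  | zero => exact fun x hx j => hx j (Nat.zero_le _)
  | succ m ih =>
    intro x hx j
    rw [pow_succ, Module.End.mul_apply]
    exact ih (h x) (fun i hi => natCast_dvd_apply hp hn h (hh i (x i))
      fun k hik => hx k (Nat.lt_of_le_of_lt hi hik)) j

theorem natCast_pow_eq_zero (hn : Monotone n) : (p : ∀ i, G p n r i) ^ n (Fin.last s) = 0 := by
  funext i k
  rw [Pi.pow_apply, Pi.pow_apply, Pi.natCast_apply, Pi.natCast_apply, Pi.zero_apply,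
    Pi.zero_apply, ← Nat.cast_pow, ZMod.natCast_eq_zero_iff]
  exact pow_dvd_pow p (hn (Fin.le_last i))

theorem DiagonalDvd.isNilpotent (hp : p ≠ 0) (hn : StrictMono n)
    {h : Module.End ℤ (∀ i, G p n r i)} (hh : DiagonalDvd p h) : IsNilpotent h :=
  ⟨(s + 1) * n (Fin.last s), by
    rw [pow_mul]
    exact Module.End.pow_eq_zero_of_forall_natCast_dvd (natCast_pow_eq_zero hn.monotone)
      (hh.natCast_dvd_pow_apply hp hn)⟩

theorem mem_jacobson_iff_diagonalDvd (hp : p.Prime) (hn : StrictMono n)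
    (f : Module.End ℤ (∀ i, G p n r i)) :
    f ∈ (⊥ : TwoSidedIdeal (Module.End ℤ (∀ i, G p n r i))).jacobson ↔ DiagonalDvd p f :=
  ⟨diagonalDvd_of_mem_jacobson hp, fun hf =>
    TwoSidedIdeal.mem_jacobson_bot_of_forall_isNilpotent_mul
      fun y => (hf.mul_left hp.ne_zero hn y).isNilpotent hp.ne_zero hn⟩

end HomocyclicSum

theorem stmt5_general (p : ℕ) (hp : p.Prime) (s : ℕ) (n : Fin (s + 1) → ℕ)
    (hmono : StrictMono n)
    (r : Fin (s + 1) → ℕ)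
    (f : Module.End ℤ (∀ i : Fin (s + 1), Fin (r i) → ZMod (p ^ n i))) :
    f ∈ TwoSidedIdeal.jacobson
        (⊥ : TwoSidedIdeal (Module.End ℤ (∀ i : Fin (s + 1), Fin (r i) → ZMod (p ^ n i)))) ↔
    ∀ i : Fin (s + 1), ∃ g : (Fin (r i) → ZMod (p ^ n i)) →ₗ[ℤ] (Fin (r i) → ZMod (p ^ n i)),
      (LinearMap.proj i) ∘ₗ (f : (∀ i, Fin (r i) → ZMod (p ^ n i)) →ₗ[ℤ] _) ∘ₗ
        (LinearMap.single ℤ (fun i => Fin (r i) → ZMod (p ^ n i)) i) = p • g :=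
  (HomocyclicSum.mem_jacobson_iff_diagonalDvd hp hmono f).trans
    (HomocyclicSum.diagonalDvd_iff_forall_exists_block_eq_smul f)

/-- For `G = ⊕ G i` with `G i ≅ (ℤ/p^(n i))^(r i)` and `n` strictly increasing,
the Jacobson radical `J` of `End(G)` consists exactly of the endomorphisms `f` whose
diagonal block components `f_{ii}` are divisible by `p` (off-diagonal blocks unrestricted):
`J_{ij} = E_{ij}` for `i ≠ j` and `J_{ii} = p E_{ii}`. -/
theorem stmt5 (p : ℕ) (hp : p.Prime) (s : ℕ) (n : Fin (s + 1) → ℕ)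
    (hpos : 0 < n 0) (hmono : StrictMono n)
    (r : Fin (s + 1) → ℕ) (hr : ∀ i, 0 < r i)
    (f : Module.End ℤ (∀ i : Fin (s + 1), Fin (r i) → ZMod (p ^ n i))) :
    f ∈ TwoSidedIdeal.jacobson
        (⊥ : TwoSidedIdeal (Module.End ℤ (∀ i : Fin (s + 1), Fin (r i) → ZMod (p ^ n i)))) ↔
    ∀ i : Fin (s + 1), ∃ g : (Fin (r i) → ZMod (p ^ n i)) →ₗ[ℤ] (Fin (r i) → ZMod (p ^ n i)),
      (LinearMap.proj i) ∘ₗ (f : (∀ i, Fin (r i) → ZMod (p ^ n i)) →ₗ[ℤ] _) ∘ₗ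
        (LinearMap.single ℤ (fun i => Fin (r i) → ZMod (p ^ n i)) i) = p • g :=
  stmt5_general p hp s n hmono r f
end

section
/- With α the upper annihilating function for exponents n_1 < ⋯ < n_s, for all j < s and all t ≥ 1, n_j − α(j,j,t) ≤ n_s − α(s,s,t). More precisely, n_j − α(j,j,t) ≤ n_{j+1} − α(j+1,j+1,t) for each j < s. -/
/-- The upper annihilating function `α(i,j,t)` associated to exponents `n 1 < ⋯ < n s`:
`α(s,s,1) = 1`, `α(i,j,1) = 0` otherwise, and for `t ≥ 2`, `α(i,j,t)` is the minimum of
`n j − n (j−1) + α(i,j−1,t−1)`, `n i − n (i−1) + α(i−1,j,t−1)`, `α(i,j,t−1) + 1`,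
`α(i+1,j,t−1)`, `α(i,j+1,t−1)`, omitting the terms whose indices fall outside `{1,…,s}`. -/
def alphaF (s : ℕ) (n : ℕ → ℕ) : ℕ → ℕ → ℕ → ℕ
  | _, _, 0 => 0
  | i, j, 1 => if i = s ∧ j = s then 1 else 0
  | i, j, t + 2 =>
      List.foldr min (alphaF s n i j (t + 1) + 1)
        ((if 2 ≤ j then [n j - n (j - 1) + alphaF s n i (j - 1) (t + 1)] else []) ++
         (if 2 ≤ i then [n i - n (i - 1) + alphaF s n (i - 1) j (t + 1)] else []) ++
         (if i + 1 ≤ s then [alphaF s n (i + 1) j (t + 1)] else []) ++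
         (if j + 1 ≤ s then [alphaF s n i (j + 1) (t + 1)] else []))

/-!
Think of `α(i,j,t)` as the cheapest way to spend `t - 1` moves of the pair `(i,j)` in
`{1,…,s}²`: lowering a coordinate from `m + 1` to `m` costs the gap `n (m+1) - n m`, raising
it is free, standing still costs `1`, and ending at `(s,s)` costs `1`. The heart of the matter
is the diagonal inequality `α(j+1,j+1,t) ≤ (n (j+1) - n j) + α(j,j,t)`; the theorem follows by
telescoping. That inequality is not inductive on its own: it is proved by induction on `t`
together with three companion inequalities (`RowShift`, `SubdiagonalShift`, `ColumnShift`).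
At time `t + 2` one bounds each of the five terms in the minimum defining `α` using the four
inequalities at times `t` and `t + 1`, the symmetry `α(i,j,t) = α(j,i,t)`, and the cost
`gap n m` of two extra moves spent oscillating across an edge `m` between the coordinates.
-/

theorem List.le_foldr_min_iff {α : Type*} [LinearOrder α] {a b : α} {l : List α} :
    a ≤ l.foldr min b ↔ a ≤ b ∧ ∀ x ∈ l, a ≤ x := by
  induction l with
  | nil => simp
  | cons y l ih => simp [ih, and_left_comm]

namespace AlphaF

def gap (n : ℕ → ℕ) (m : ℕ) : ℕ := n (m + 1) - n m

def RowShift (s : ℕ) (n : ℕ → ℕ) (r : ℕ) : Prop :=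
  ∀ i k m, 1 ≤ k → i + 1 ≤ s → 1 ≤ m → k ≤ m + 1 → m + 1 ≤ i →
    alphaF s n (i + 1) k (r + 1) ≤ gap n m + alphaF s n i k r

def SubdiagonalShift (s : ℕ) (n : ℕ → ℕ) (r : ℕ) : Prop :=
  ∀ i c, 1 ≤ c → c + 1 ≤ i → i + 1 ≤ s →
    alphaF s n (i + 1) (c + 1) r ≤ gap n c + alphaF s n i c r

def ColumnShift (s : ℕ) (n : ℕ → ℕ) (r : ℕ) : Prop :=
  ∀ i j, 1 ≤ i → i ≤ j → j + 1 ≤ s → alphaF s n i (j + 1) r ≤ alphaF s n i j (r + 1)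

def DiagonalShift (s : ℕ) (n : ℕ → ℕ) (r : ℕ) : Prop :=
  ∀ j, 1 ≤ j → j + 1 ≤ s → alphaF s n (j + 1) (j + 1) r ≤ gap n j + alphaF s n j j r

variable {s : ℕ} {n : ℕ → ℕ}

theorem le_alphaF_add_two_iff {x i j t : ℕ} :
    x ≤ alphaF s n i j (t + 2) ↔
      x ≤ alphaF s n i j (t + 1) + 1 ∧
      (2 ≤ j → x ≤ n j - n (j - 1) + alphaF s n i (j - 1) (t + 1)) ∧
      (2 ≤ i → x ≤ n i - n (i - 1) + alphaF s n (i - 1) j (t + 1)) ∧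
      (i + 1 ≤ s → x ≤ alphaF s n (i + 1) j (t + 1)) ∧
      (j + 1 ≤ s → x ≤ alphaF s n i (j + 1) (t + 1)) := by
  rw [alphaF, List.le_foldr_min_iff]
  split_ifs <;> simp_all

theorem alphaF_comm (i j t : ℕ) : alphaF s n i j t = alphaF s n j i t := by
  induction t using Nat.strong_induction_on generalizing i j with
  | _ t ih =>
  match t with
  | 0 => rfl
  | 1 => simp only [alphaF, and_comm]
  | t + 2 =>
    have key : ∀ i j, alphaF s n i j (t + 2) ≤ alphaF s n j i (t + 2) := fun i j => by
      have := le_alphaF_add_two_iff.1 (le_refl (alphaF s n i j (t + 2)))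
      rw [le_alphaF_add_two_iff]
      simp only [ih (t + 1) (by omega)] at this ⊢
      tauto
    exact le_antisymm (key i j) (key j i)

theorem one_le_gap (hmono : ∀ k, 1 ≤ k → k + 1 ≤ s → n k < n (k + 1)) {m : ℕ}
    (hm : 1 ≤ m) (hms : m + 1 ≤ s) : 1 ≤ gap n m := by
  have := hmono m hm hms
  unfold gap
  omega

theorem alphaF_one_le_one (i j : ℕ) : alphaF s n i j 1 ≤ 1 := by
  simp only [alphaF]
  split <;> simp

theorem alphaF_one_of_lt {i j : ℕ} (h : i < s ∨ j < s) : alphaF s n i j 1 = 0 := by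
  simp only [alphaF]
  rw [if_neg (by omega)]

theorem le_add_alphaF_add_two {x C i j t : ℕ}
    (hstay : x ≤ C + (alphaF s n i j (t + 1) + 1))
    (hdown_right : ∀ c, 1 ≤ c → j = c + 1 → x ≤ C + (gap n c + alphaF s n i c (t + 1)))
    (hdown_left : ∀ p, 1 ≤ p → i = p + 1 → x ≤ C + (gap n p + alphaF s n p j (t + 1)))
    (hup_left : i + 1 ≤ s → x ≤ C + alphaF s n (i + 1) j (t + 1))
    (hup_right : j + 1 ≤ s → x ≤ C + alphaF s n i (j + 1) (t + 1)) :
    x ≤ C + alphaF s n i j (t + 2) := by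
  rw [← tsub_le_iff_left, le_alphaF_add_two_iff]
  refine ⟨by omega, fun hj => ?_, fun hi => ?_, fun hi => ?_, fun hj => ?_⟩
  · have := hdown_right (j - 1) (by omega) (by omega)
    rw [gap, Nat.sub_add_cancel (by omega : 1 ≤ j)] at this
    omega
  · have := hdown_left (i - 1) (by omega) (by omega)
    rw [gap, Nat.sub_add_cancel (by omega : 1 ≤ i)] at this
    omega
  · have := hup_left hi; omega
  · have := hup_right hj; omega

theorem alphaF_succ_le_add_one (i j t : ℕ) : alphaF s n i j (t + 1) ≤ alphaF s n i j t + 1 := by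
  cases t with
  | zero => exact alphaF_one_le_one i j
  | succ t => exact (le_alphaF_add_two_iff.1 le_rfl).1

theorem alphaF_succ_le_left_succ {i : ℕ} (hi : i + 1 ≤ s) (j t : ℕ) :
    alphaF s n i j (t + 1) ≤ alphaF s n (i + 1) j t := by
  cases t with
  | zero => simp [alphaF_one_of_lt (show i < s ∨ j < s by omega)]
  | succ t => exact (le_alphaF_add_two_iff.1 le_rfl).2.2.2.1 hi

theorem alphaF_succ_le_right_succ {j : ℕ} (hj : j + 1 ≤ s) (i t : ℕ) :
    alphaF s n i j (t + 1) ≤ alphaF s n i (j + 1) t := by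
  rw [alphaF_comm, alphaF_comm i]
  exact alphaF_succ_le_left_succ hj i t

variable (hmono : ∀ k, 1 ≤ k → k + 1 ≤ s → n k < n (k + 1))
include hmono

theorem alphaF_succ_left_le {p : ℕ} (hp : 1 ≤ p) (hps : p + 1 ≤ s) (j t : ℕ) :
    alphaF s n (p + 1) j (t + 1) ≤ gap n p + alphaF s n p j t := by
  cases t with
  | zero => linarith [alphaF_one_le_one (s := s) (n := n) (p + 1) j, one_le_gap hmono hp hps]
  | succ t =>
    have h := (le_alphaF_add_two_iff.1 (le_refl (alphaF s n (p + 1) j (t + 2)))).2.2.1 (by omega)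
    rwa [Nat.add_sub_cancel] at h

theorem alphaF_succ_right_le {c : ℕ} (hc : 1 ≤ c) (hcs : c + 1 ≤ s) (i t : ℕ) :
    alphaF s n i (c + 1) (t + 1) ≤ gap n c + alphaF s n i c t := by
  rw [alphaF_comm, alphaF_comm i]
  exact alphaF_succ_left_le hmono hc hcs i t

theorem alphaF_add_two_left_le {p : ℕ} (hp : 1 ≤ p) (hps : p + 1 ≤ s) (j t : ℕ) :
    alphaF s n (p + 1) j (t + 2) ≤ gap n p + alphaF s n (p + 1) j t :=
  (alphaF_succ_left_le hmono hp hps j (t + 1)).trans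
    (Nat.add_le_add_left (alphaF_succ_le_left_succ hps j t) _)

theorem alphaF_add_two_right_le {c : ℕ} (hc : 1 ≤ c) (hcs : c + 1 ≤ s) (i t : ℕ) :
    alphaF s n i (c + 1) (t + 2) ≤ gap n c + alphaF s n i (c + 1) t := by
  rw [alphaF_comm, alphaF_comm i]
  exact alphaF_add_two_left_le hmono hc hcs i t

theorem alphaF_add_two_le_of_between : ∀ (t a b m : ℕ), 1 ≤ b → b ≤ m → m + 2 ≤ a →
    a ≤ s → alphaF s n a b (t + 2) ≤ gap n m + alphaF s n a b t
  | 0, a, b, m, hb, hbm, hma, has => by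
    have := alphaF_succ_le_add_one (s := s) (n := n) a b 1
    rw [alphaF_one_of_lt (by omega)] at this
    linarith [one_le_gap hmono (le_trans hb hbm) (by omega : m + 1 ≤ s)]
  | 1, a, b, m, hb, hbm, hma, has => by
    have h2 := alphaF_succ_le_right_succ (s := s) (n := n) (by omega : b + 1 ≤ s) a 2
    have h1 := alphaF_succ_le_add_one (s := s) (n := n) a (b + 1) 1
    rw [alphaF_one_of_lt (by omega)] at h1
    linarith [one_le_gap hmono (le_trans hb hbm) (by omega : m + 1 ≤ s)]
  | t + 2, a, b, m, hb, hbm, hma, has => by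
    have ih := alphaF_add_two_le_of_between (t + 1)
    refine le_add_alphaF_add_two ?_ ?_ ?_ ?_ ?_
    · linarith [alphaF_succ_le_add_one (s := s) (n := n) a b (t + 3), ih a b m hb hbm hma has]
    · rintro c hc rfl
      linarith [alphaF_succ_right_le hmono hc (by omega) a (t + 3),
        ih a c m hc (by omega) hma has]
    · rintro p hp rfl
      have hdown := alphaF_succ_left_le hmono hp has b (t + 3)
      rcases Nat.lt_or_ge (m + 1) p with hlt | hge
      · linarith [ih p b m hb hbm hlt (by omega)]
      · obtain rfl : p = m + 1 := by omega
        linarith [alphaF_add_two_left_le hmono (p := m) (by omega) (by omega) b (t + 1)]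
    · intro has'
      linarith [alphaF_succ_le_left_succ (s := s) (n := n) has' b (t + 3),
        ih (a + 1) b m hb hbm (by omega) has']
    · intro hbs
      have hup := alphaF_succ_le_right_succ (s := s) (n := n) hbs a (t + 3)
      rcases Nat.lt_or_ge b m with hlt | hge
      · linarith [ih a (b + 1) m (by omega) hlt hma has]
      · obtain rfl : b = m := by omega
        linarith [alphaF_add_two_right_le hmono hb hbs a (t + 1)]

theorem rowShift_add_two {r : ℕ} (row₁ : RowShift s n (r + 1)) (row₀ : RowShift s n r)
    (sub₁ : SubdiagonalShift s n (r + 1)) (col₁ : ColumnShift s n (r + 1))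
    (col₀ : ColumnShift s n r) : RowShift s n (r + 2) := by
  intro i k m hk his hm hkm hmi
  refine le_add_alphaF_add_two ?_ ?_ ?_ ?_ ?_
  · linarith [alphaF_succ_le_add_one (s := s) (n := n) (i + 1) k (r + 2),
      row₁ i k m hk his hm hkm hmi]
  · rintro c hc rfl
    linarith [alphaF_succ_right_le hmono hc (by omega) (i + 1) (r + 2),
      row₁ i c m hc his hm (by omega) hmi]
  · rintro p hp rfl
    rcases Nat.lt_or_ge k (p + 1) with hlt | hge
    · linarith [alphaF_add_two_le_of_between hmono (r + 1) (p + 2) k p hk (by omega) le_rfl his,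
        row₀ (p + 1) k m hk his hm hkm hmi, col₀ k p hk (by omega) (by omega),
        alphaF_comm (s := s) (n := n) (p + 1) k r, alphaF_comm (s := s) (n := n) k p (r + 1)]
    · obtain ⟨rfl, rfl⟩ : k = p + 1 ∧ m = p := ⟨by omega, by omega⟩
      linarith [alphaF_add_two_right_le hmono hm (by omega) (m + 2) (r + 1),
        sub₁ (m + 1) m hm le_rfl his, alphaF_comm (s := s) (n := n) (m + 1) m (r + 1)]
  · intro _
    rcases Nat.lt_or_ge m k with hlt | hge
    · obtain rfl : k = m + 1 := by omega
      linarith [alphaF_add_two_right_le hmono hm (by omega) (i + 1) (r + 1)]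
    · linarith [alphaF_add_two_le_of_between hmono (r + 1) (i + 1) k m hk hge (by omega) his]
  · intro hks
    rcases Nat.lt_or_ge m k with hlt | hge
    · obtain rfl : k = m + 1 := by omega
      linarith [alphaF_add_two_right_le hmono hm (by omega) (i + 1) (r + 1),
        col₁ (m + 1) i (by omega) hmi his,
        alphaF_succ_le_left_succ (s := s) (n := n) (i := m + 1) (by omega) i (r + 1),
        alphaF_comm (s := s) (n := n) (i + 1) (m + 1) (r + 1),
        alphaF_comm (s := s) (n := n) (m + 2) i (r + 1)]
    · linarith [alphaF_succ_le_right_succ (s := s) (n := n) hks (i + 1) (r + 2),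
        row₁ i (k + 1) m (by omega) his hm (by omega) hmi]

theorem subdiagonalShift_add_two {r : ℕ} (row₁ : RowShift s n (r + 1))
    (sub₁ : SubdiagonalShift s n (r + 1)) (diag₁ : DiagonalShift s n (r + 1))
    (sub₀ : SubdiagonalShift s n r) (col₀ : ColumnShift s n r) :
    SubdiagonalShift s n (r + 2) := by
  intro i c hc hci his
  refine le_add_alphaF_add_two ?_ ?_ ?_ ?_ ?_
  · linarith [alphaF_succ_le_add_one (s := s) (n := n) (i + 1) (c + 1) (r + 1),
      sub₁ i c hc hci his]
  · rintro e he rfl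
    linarith [alphaF_succ_right_le hmono (c := e + 1) (by omega) (by omega) (i + 1) (r + 1),
      sub₁ i e he (by omega) his]
  · rintro p hp rfl
    rcases Nat.lt_or_ge c p with hlt | hge
    · linarith [alphaF_add_two_le_of_between hmono r (p + 2) (c + 1) p (by omega) hlt le_rfl his,
        sub₀ (p + 1) c hc hci his, col₀ c p hc (by omega) (by omega),
        alphaF_comm (s := s) (n := n) (p + 1) c r, alphaF_comm (s := s) (n := n) c p (r + 1)]
    · obtain rfl : c = p := by omega
      linarith [row₁ (c + 1) (c + 1) c (by omega) his hc le_rfl le_rfl, diag₁ c hc (by omega)]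
  · intro _
    linarith [alphaF_succ_right_le hmono hc (by omega) (i + 1) (r + 1)]
  · intro _
    linarith [row₁ i (c + 1) c (by omega) his hc le_rfl hci]

theorem columnShift_add_two {r : ℕ} (col₁ : ColumnShift s n (r + 1))
    (col₀ : ColumnShift s n r) (sub₂ : SubdiagonalShift s n (r + 2)) :
    ColumnShift s n (r + 2) := by
  intro i j hi hij hjs
  suffices h : alphaF s n i (j + 1) (r + 2) ≤ 0 + alphaF s n i j ((r + 1) + 2) by
    simpa using h
  refine le_add_alphaF_add_two ?_ ?_ ?_ ?_ ?_
  · linarith [alphaF_succ_le_add_one (s := s) (n := n) i (j + 1) (r + 1), col₁ i j hi hij hjs]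
  · rintro d hd rfl
    rcases Nat.lt_or_ge i (d + 1) with hlt | hge
    · linarith [alphaF_add_two_le_of_between hmono r (d + 2) i d hi (by omega) le_rfl hjs,
        alphaF_comm (s := s) (n := n) i (d + 2) (r + 2), alphaF_comm (s := s) (n := n) i (d + 2) r,
        col₀ i (d + 1) hi (by omega) hjs, col₁ i d hi (by omega) (by omega)]
    · obtain rfl : i = d + 1 := by omega
      linarith [sub₂ (d + 1) d hd le_rfl hjs,
        alphaF_comm (s := s) (n := n) (d + 1) (d + 2) (r + 2)]
  · rintro p hp rfl
    linarith [alphaF_succ_left_le hmono hp (by omega) (j + 1) (r + 1), col₁ p j hp (by omega) hjs]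
  · intro his
    rcases Nat.lt_or_ge i j with hlt | hge
    · linarith [alphaF_succ_le_left_succ (s := s) (n := n) his (j + 1) (r + 1),
        col₁ (i + 1) j (by omega) hlt hjs]
    · obtain rfl : i = j := by omega
      linarith [alphaF_comm (s := s) (n := n) i (i + 1) (r + 2)]
  · intro _
    exact (zero_add _).ge

theorem diagonalShift_add_two {r : ℕ} (sub₁ : SubdiagonalShift s n (r + 1))
    (diag₁ : DiagonalShift s n (r + 1)) : DiagonalShift s n (r + 2) := by
  intro j hj hjs
  refine le_add_alphaF_add_two ?_ ?_ ?_ ?_ ?_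
  · linarith [alphaF_succ_le_add_one (s := s) (n := n) (j + 1) (j + 1) (r + 1), diag₁ j hj hjs]
  · rintro d hd rfl
    linarith [alphaF_succ_right_le hmono (c := d + 1) (by omega) hjs (d + 2) (r + 1),
      sub₁ (d + 1) d hd le_rfl hjs]
  · rintro d hd rfl
    linarith [alphaF_succ_left_le hmono (p := d + 1) (by omega) hjs (d + 2) (r + 1),
      sub₁ (d + 1) d hd le_rfl hjs, alphaF_comm (s := s) (n := n) (d + 1) (d + 2) (r + 1),
      alphaF_comm (s := s) (n := n) (d + 1) d (r + 1)]
  · intro _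
    exact alphaF_succ_right_le hmono hj hjs (j + 1) (r + 1)
  · intro _
    exact alphaF_succ_left_le hmono hj hjs (j + 1) (r + 1)

theorem shift_inequalities :
    ∀ r, RowShift s n r ∧ SubdiagonalShift s n r ∧ ColumnShift s n r ∧ DiagonalShift s n r
  | 0 => by
    refine ⟨fun i k m _ his _ _ hmi => ?_, fun _ _ _ _ _ => ?_, fun _ _ _ _ _ => ?_,
      fun _ _ _ => ?_⟩ <;> simp only [alphaF, zero_le]
    rw [if_neg (by omega)]
    exact Nat.zero_le _
  | 1 => by
    refine ⟨fun i k m _ his hm _ hmi => ?_, fun i c _ hci his => ?_, fun i j _ hij hjs => ?_,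
      fun j hj hjs => ?_⟩
    · have := alphaF_succ_le_add_one (s := s) (n := n) (i + 1) k 1
      rw [alphaF_one_of_lt (by omega)] at this
      linarith [one_le_gap hmono hm (by omega : m + 1 ≤ s)]
    · rw [alphaF_one_of_lt (by omega)]
      exact Nat.zero_le _
    · rw [alphaF_one_of_lt (by omega)]
      exact Nat.zero_le _
    · linarith [alphaF_one_le_one (s := s) (n := n) (j + 1) (j + 1), one_le_gap hmono hj hjs]
  | r + 2 => by
    obtain ⟨row₀, sub₀, col₀, -⟩ := shift_inequalities r
    obtain ⟨row₁, sub₁, col₁, diag₁⟩ := shift_inequalities (r + 1)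
    have sub₂ := subdiagonalShift_add_two hmono row₁ sub₁ diag₁ sub₀ col₀
    exact ⟨rowShift_add_two hmono row₁ row₀ sub₁ col₁ col₀, sub₂,
      columnShift_add_two hmono col₁ col₀ sub₂, diagonalShift_add_two hmono sub₁ diag₁⟩

end AlphaF

theorem stmt10_general (s : ℕ) (n : ℕ → ℕ)
    (hmono : ∀ k, 1 ≤ k → k + 1 ≤ s → n k < n (k + 1)) :
    (∀ j t, 1 ≤ j → j + 1 ≤ s → 1 ≤ t →
      (n j : ℤ) - alphaF s n j j t ≤ (n s : ℤ) - alphaF s n s s t) ∧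
    (∀ j t, 1 ≤ j → j + 1 ≤ s → 1 ≤ t →
      (n j : ℤ) - alphaF s n j j t ≤ (n (j + 1) : ℤ) - alphaF s n (j + 1) (j + 1) t) := by
  have step : ∀ j t, 1 ≤ j → j + 1 ≤ s →
      (n j : ℤ) - alphaF s n j j t ≤ (n (j + 1) : ℤ) - alphaF s n (j + 1) (j + 1) t := by
    intro j t hj hjs
    have h := (AlphaF.shift_inequalities hmono t).2.2.2 j hj hjs
    have := hmono j hj hjs
    unfold AlphaF.gap at h
    omega
  have chain : ∀ j t k, 1 ≤ j → j ≤ k → k ≤ s →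
      (n j : ℤ) - alphaF s n j j t ≤ (n k : ℤ) - alphaF s n k k t := by
    intro j t k hj hjk
    induction k, hjk using Nat.le_induction with
    | base => exact fun _ => le_rfl
    | succ k hjk ih => exact fun hks => (ih (by omega)).trans (step k t (by omega) hks)
  exact ⟨fun j t hj hjs _ => chain j t s hj (by omega) le_rfl,
    fun j t hj hjs _ => step j t hj hjs⟩

/-- For `j < s` and `t ≥ 1`: `n j − α(j,j,t) ≤ n s − α(s,s,t)`, and more precisely
`n j − α(j,j,t) ≤ n (j+1) − α(j+1,j+1,t)`. -/
theorem stmt10 (s : ℕ) (n : ℕ → ℕ) (hs : 1 ≤ s)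
    (hpos : ∀ k, 1 ≤ k → k ≤ s → 0 < n k)
    (hmono : ∀ k, 1 ≤ k → k + 1 ≤ s → n k < n (k + 1)) :
    (∀ j t, 1 ≤ j → j + 1 ≤ s → 1 ≤ t →
      (n j : ℤ) - alphaF s n j j t ≤ (n s : ℤ) - alphaF s n s s t) ∧
    (∀ j t, 1 ≤ j → j + 1 ≤ s → 1 ≤ t →
      (n j : ℤ) - alphaF s n j j t ≤ (n (j + 1) : ℤ) - alphaF s n (j + 1) (j + 1) t) :=
  stmt10_general s n hmono
end

section
/- Suppose the exponents n_1 < ⋯ < n_s satisfy n_{j} − n_{j−1} ≥ 2 for all 2 ≤ j ≤ s (i.e., σ(G) ≥ 2). Then the upper annihilating function satisfies α(i,j,t) = max(0, t + i + j − 2s) for all 1 ≤ i,j ≤ s and t ≥ 1. -/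
set_option maxHeartbeats 1000000 in
/-- Case 1: if all gaps `n j − n (j−1)` are at least 2 (`σ(G) ≥ 2`), then
`α(i,j,t) = max(0, t + i + j − 2s)`. -/
theorem stmt11 (s : ℕ) (n : ℕ → ℕ) (hs : 1 ≤ s)
    (hpos : ∀ k, 1 ≤ k → k ≤ s → 0 < n k)
    (hmono : ∀ k, 1 ≤ k → k + 1 ≤ s → n k < n (k + 1))
    (hgap : ∀ j, 2 ≤ j → j ≤ s → n (j - 1) + 2 ≤ n j) :
    ∀ i j t, 1 ≤ i → i ≤ s → 1 ≤ j → j ≤ s → 1 ≤ t →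
      (alphaF s n i j t : ℤ) = max 0 ((t : ℤ) + i + j - 2 * s) := by
  have key : ∀ t, 1 ≤ t → ∀ i j, 1 ≤ i → i ≤ s → 1 ≤ j → j ≤ s →
      alphaF s n i j t = t + i + j - 2 * s := by
    intro t ht
    induction t, ht using Nat.le_induction with
    | base =>
      intro i j hi1 his hj1 hjs
      simp only [alphaF]
      split_ifs with h <;> omega
    | succ m hm IH =>
      obtain ⟨k, rfl⟩ : ∃ k, m = k + 1 := ⟨m - 1, by omega⟩
      intro i j hi1 his hj1 hjs
      have e0 := IH i j hi1 his hj1 hjs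
      have E1 : ¬ 2 ≤ j ∨ alphaF s n i (j - 1) (k + 1) = (k + 1) + i + (j - 1) - 2 * s := by
        rcases le_or_gt 2 j with h | h
        · exact Or.inr (IH i (j - 1) hi1 his (by omega) (by omega))
        · exact Or.inl (by omega)
      have E2 : ¬ 2 ≤ i ∨ alphaF s n (i - 1) j (k + 1) = (k + 1) + (i - 1) + j - 2 * s := by
        rcases le_or_gt 2 i with h | h
        · exact Or.inr (IH (i - 1) j (by omega) (by omega) hj1 hjs)
        · exact Or.inl (by omega)
      have E3 : ¬ i + 1 ≤ s ∨ alphaF s n (i + 1) j (k + 1) = (k + 1) + (i + 1) + j - 2 * s := by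
        rcases le_or_gt (i + 1) s with h | h
        · exact Or.inr (IH (i + 1) j (by omega) h hj1 hjs)
        · exact Or.inl (by omega)
      have E4 : ¬ j + 1 ≤ s ∨ alphaF s n i (j + 1) (k + 1) = (k + 1) + i + (j + 1) - 2 * s := by
        rcases le_or_gt (j + 1) s with h | h
        · exact Or.inr (IH i (j + 1) hi1 his (by omega) h)
        · exact Or.inl (by omega)
      have G1 : ¬ 2 ≤ j ∨ n (j - 1) + 2 ≤ n j := by
        rcases le_or_gt 2 j with h | h
        · exact Or.inr (hgap j h hjs)
        · exact Or.inl (by omega)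
      have G2 : ¬ 2 ≤ i ∨ n (i - 1) + 2 ≤ n i := by
        rcases le_or_gt 2 i with h | h
        · exact Or.inr (hgap i h his)
        · exact Or.inl (by omega)
      by_cases hj2 : 2 ≤ j <;> by_cases hi2 : 2 ≤ i <;>
        by_cases hiS : i + 1 ≤ s <;> by_cases hjS : j + 1 ≤ s <;>
      · first | replace E1 := E1.resolve_left (not_not_intro hj2) | clear E1
        first | replace G1 := G1.resolve_left (not_not_intro hj2) | clear G1
        first | replace E2 := E2.resolve_left (not_not_intro hi2) | clear E2
        first | replace G2 := G2.resolve_left (not_not_intro hi2) | clear G2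
        first | replace E3 := E3.resolve_left (not_not_intro hiS) | clear E3
        first | replace E4 := E4.resolve_left (not_not_intro hjS) | clear E4
        simp only [alphaF]
        simp only [hj2, hi2, hiS, hjS, if_true, if_false, ite_true, ite_false,
          List.cons_append, List.nil_append, List.append_nil, List.foldr_cons, List.foldr_nil]
        omega
  intro i j t hi1 his hj1 hjs ht
  rw [key t ht i j hi1 his hj1 hjs]
  omega
end

section
/- Suppose the exponents n_1 < ⋯ < n_s satisfy min_j(n_j − n_{j−1}) = 1 and n_s − n_{s−1} = 1. Then the upper annihilating function satisfies α(i,j,t) = max(0, ⌊(t + i + j − 2s + 1)/2⌋) for all 1 ≤ i,j ≤ s and t ≥ 1. -/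
private lemma alphaF_one' (s : ℕ) (n : ℕ → ℕ) (i j : ℕ) :
    alphaF s n i j 1 = if i = s ∧ j = s then 1 else 0 := rfl

private lemma alphaF_succ' (s : ℕ) (n : ℕ → ℕ) (i j m : ℕ) : alphaF s n i j (m + 2) =
      List.foldr min (alphaF s n i j (m + 1) + 1)
        ((if 2 ≤ j then [n j - n (j - 1) + alphaF s n i (j - 1) (m + 1)] else []) ++
         (if 2 ≤ i then [n i - n (i - 1) + alphaF s n (i - 1) j (m + 1)] else []) ++
         (if i + 1 ≤ s then [alphaF s n (i + 1) j (m + 1)] else []) ++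
         (if j + 1 ≤ s then [alphaF s n i (j + 1) (m + 1)] else [])) := rfl

set_option maxHeartbeats 2000000 in
/-- Case 2: if the minimal gap is 1 and it is attained at the top, i.e.
`n s = n (s−1) + 1`, then `α(i,j,t) = max(0, ⌊(t + i + j − 2s + 1)/2⌋)`. -/
theorem stmt12 (s : ℕ) (n : ℕ → ℕ) (hs : 2 ≤ s)
    (hpos : ∀ k, 1 ≤ k → k ≤ s → 0 < n k)
    (hmono : ∀ k, 1 ≤ k → k + 1 ≤ s → n k < n (k + 1))
    (hgap : n s = n (s - 1) + 1) :
    ∀ i j t, 1 ≤ i → i ≤ s → 1 ≤ j → j ≤ s → 1 ≤ t →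
      (alphaF s n i j t : ℤ) = max 0 (((t : ℤ) + i + j - 2 * s + 1).fdiv 2) := by
  have hdiv : ∀ x : ℤ, x.fdiv 2 = x / 2 := fun x => Int.fdiv_eq_ediv_of_nonneg x (by norm_num)
  suffices H : ∀ t, 1 ≤ t → ∀ i j, 1 ≤ i → i ≤ s → 1 ≤ j → j ≤ s →
      (alphaF s n i j t : ℤ) = max 0 (((t : ℤ) + i + j - 2 * s + 1).fdiv 2) by
    intro i j t hi his hj hjs ht; exact H t ht i j hi his hj hjs
  intro t ht
  induction t, ht using Nat.le_induction with
  | base =>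
    intro i j hi his hj hjs
    rw [alphaF_one', hdiv]
    by_cases h : i = s ∧ j = s
    · obtain ⟨rfl, rfl⟩ := h
      rw [if_pos ⟨rfl, rfl⟩]
      push_cast
      omega
    · have hij : i + j + 1 ≤ 2 * s := by
        rcases not_and_or.mp h with h' | h' <;> omega
      rw [if_neg h]
      push_cast
      omega
  | succ t ht IH =>
    intro i j hi his hj hjs
    obtain ⟨m, rfl⟩ : ∃ m, t = m + 1 := ⟨t - 1, by omega⟩
    rw [show m + 1 + 1 = m + 2 from rfl, alphaF_succ']
    have hd1 : 2 ≤ j → 1 ≤ n j - n (j - 1) := by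
      intro h2
      have := hmono (j - 1) (by omega) (by omega)
      rw [show j - 1 + 1 = j from by omega] at this
      omega
    have hd2 : 2 ≤ i → 1 ≤ n i - n (i - 1) := by
      intro h2
      have := hmono (i - 1) (by omega) (by omega)
      rw [show i - 1 + 1 = i from by omega] at this
      omega
    have he1 : j = s → n j - n (j - 1) = 1 := by rintro rfl; omega
    have he2 : i = s → n i - n (i - 1) = 1 := by rintro rfl; omega
    split_ifs with h1 h2 h3 h4
    all_goals simp only [List.cons_append, List.nil_append, List.append_nil,
      List.singleton_append, List.foldr_cons, List.foldr_nil]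
    all_goals push_cast
    all_goals rw [IH i j hi his hj hjs]
    all_goals try rw [IH i (j - 1) hi his (by omega) (by omega)]
    all_goals try rw [IH (i - 1) j (by omega) (by omega) hj hjs]
    all_goals try rw [IH (i + 1) j (by omega) (by omega) hj hjs]
    all_goals try rw [IH i (j + 1) hi his (by omega) (by omega)]
    all_goals simp only [hdiv]
    all_goals try have e1 := hd1 h1
    all_goals try have e2 := hd2 h2
    all_goals try have e3 := he1 (by omega)
    all_goals try have e4 := he2 (by omega)
    all_goals push_cast
    all_goals omega
end

section
/- Let G = ⊕_{i=1}^s G_i with G_i ≅ (ℤ/p^{n_i})^{r_i}, n_1 < ⋯ < n_s. Identify End(G) with block matrices and let J be the Jacobson radical. A block matrix A + 1 (A ∈ J) lies in the center of Δ(G) = 1 + J if and only if A − a 1 ∈ Ann(J) for some scalar a with a·1 ∈ J, i.e., the center of Δ(G) equals (Ann(J) + 1)·(Z(End G) ∩ Δ(G)). -/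
namespace Stmt17Aux

variable {p s : ℕ} {n r : Fin (s + 1) → ℕ}

/-- The module `G`. -/
abbrev MM (p s : ℕ) (n r : Fin (s + 1) → ℕ) := ∀ i : Fin (s + 1), Fin (r i) → ZMod (p ^ n i)

/-- generator with entry `c` at `(j, l)`. -/
def genc (j : Fin (s + 1)) (l : Fin (r j)) (c : ZMod (p ^ n j)) : MM p s n r :=
  Pi.single j (Pi.single l c)

def gen (j : Fin (s + 1)) (l : Fin (r j)) : MM p s n r := genc j l 1

lemma genc_same (j : Fin (s + 1)) (l : Fin (r j)) (c : ZMod (p ^ n j)) :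
    genc (p := p) (n := n) (r := r) j l c j l = c := by
  simp [genc]

lemma genc_ne_block {i j : Fin (s + 1)} (h : i ≠ j) (l : Fin (r j)) (c : ZMod (p ^ n j))
    (k : Fin (r i)) : genc (p := p) (n := n) (r := r) j l c i k = 0 := by
  unfold genc
  rw [Pi.single_eq_of_ne h]
  rfl

lemma genc_ne_coord {j : Fin (s + 1)} {k l : Fin (r j)} (h : k ≠ l) (c : ZMod (p ^ n j)) :
    genc (p := p) (n := n) (r := r) j l c j k = 0 := by
  unfold genc
  rw [Pi.single_eq_same, Pi.single_eq_of_ne h]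

lemma smul_coord (t : ℕ) (w : MM p s n r) (i : Fin (s + 1)) (k : Fin (r i)) :
    (t • w) i k = (t : ZMod (p ^ n i)) * w i k := by
  simp [nsmul_eq_mul]

/-- killing by global exponent -/
lemma exp_smul (hmono : StrictMono n) (w : MM p s n r) :
    (p ^ n (Fin.last s) : ℕ) • w = 0 := by
  funext i k
  rw [smul_coord]
  have hd : (p ^ n i : ℕ) ∣ p ^ n (Fin.last s) :=
    pow_dvd_pow _ (hmono.monotone (Fin.le_last i))
  rw [(ZMod.natCast_eq_zero_iff _ _).2 hd, zero_mul]
  rfl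

lemma mod_smul {q : ℕ} (w : MM p s n r) (hw : q • w = 0) (x : ℕ) :
    (x % q) • w = x • w := by
  conv_rhs => rw [← Nat.div_add_mod x q]
  rw [add_nsmul, mul_comm, mul_smul, hw, smul_zero, zero_add]

/-- The endomorphism reading coordinate `(j, l)` and writing `val • w`. -/
def readSmul (hp : 1 < p) (j : Fin (s + 1)) (l : Fin (r j)) (w : MM p s n r)
    (hw : (p ^ n j : ℕ) • w = 0) : Module.End ℤ (MM p s n r) :=
  AddMonoidHom.toIntLinearMap
    { toFun := fun z => (z j l).val • w
      map_zero' := by simp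
      map_add' := by
        intro a b
        haveI : NeZero (p ^ n j) := ⟨(pow_pos (Nat.lt_of_lt_of_le Nat.zero_lt_one hp.le) _).ne'⟩
        show ((a + b) j l).val • w = (a j l).val • w + (b j l).val • w
        rw [Pi.add_apply, Pi.add_apply, ZMod.val_add, mod_smul w hw, add_nsmul] }

lemma readSmul_apply (hp : 1 < p) (j : Fin (s + 1)) (l : Fin (r j)) (w : MM p s n r)
    (hw : (p ^ n j : ℕ) • w = 0) (z : MM p s n r) :
    readSmul hp j l w hw z = (z j l).val • w := rfl

lemma val_one' (hp : 1 < p) (hn : ∀ i, 0 < n i) (i : Fin (s + 1)) :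
    (1 : ZMod (p ^ n i)).val = 1 := by
  haveI : Fact (1 < p ^ n i) := ⟨Nat.one_lt_pow (hn i).ne' hp⟩
  exact ZMod.val_one _

lemma readSmul_gen_same (hp : 1 < p) (hn : ∀ i, 0 < n i) (j : Fin (s + 1)) (l : Fin (r j))
    (w : MM p s n r) (hw : (p ^ n j : ℕ) • w = 0) :
    readSmul hp j l w hw (gen j l) = w := by
  rw [readSmul_apply, gen, genc_same, val_one' hp hn, one_nsmul]

lemma readSmul_gen_ne_block (hp : 1 < p) (j : Fin (s + 1)) (l : Fin (r j)) (w : MM p s n r)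
    (hw : (p ^ n j : ℕ) • w = 0) {j' : Fin (s + 1)} (l' : Fin (r j')) (h : j' ≠ j) :
    readSmul hp j l w hw (gen j' l') = 0 := by
  rw [readSmul_apply, gen, genc_ne_block (Ne.symm h) l' 1, ZMod.val_zero, zero_nsmul]

lemma readSmul_gen_ne_coord (hp : 1 < p) (j : Fin (s + 1)) (l : Fin (r j)) (w : MM p s n r)
    (hw : (p ^ n j : ℕ) • w = 0) {l' : Fin (r j)} (h : l' ≠ l) :
    readSmul hp j l w hw (gen j l') = 0 := by
  rw [readSmul_apply, gen, genc_ne_coord (Ne.symm h) 1, ZMod.val_zero, zero_nsmul]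

lemma qsmul_genc (j : Fin (s + 1)) (l : Fin (r j)) (c : ZMod (p ^ n j)) :
    (p ^ n j : ℕ) • genc (p := p) (n := n) (r := r) j l c = 0 := by
  have h1 : (p ^ n j : ℕ) • c = 0 := by
    rw [nsmul_eq_mul, ZMod.natCast_self, zero_mul]
  have : genc (p := p) (n := n) (r := r) j l ((p ^ n j : ℕ) • c)
      = (p ^ n j : ℕ) • genc j l c := by
    unfold genc
    rw [Pi.single_smul, Pi.single_smul]
  rw [← this, h1]
  unfold genc
  simp

/-- torsion of generators under any endomorphism -/
lemma qsmul_apply (f : Module.End ℤ (MM p s n r)) (j : Fin (s + 1)) (l : Fin (r j))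
    (c : ZMod (p ^ n j)) : (p ^ n j : ℕ) • f (genc j l c) = 0 := by
  rw [← map_nsmul, qsmul_genc, map_zero]

/-- decomposition of an arbitrary element into generators -/
lemma sum_gen (hp : 1 < p) (hn : ∀ i, 0 < n i) (z : MM p s n r) :
    ∑ j : Fin (s + 1), ∑ l : Fin (r j), (z j l).val • gen (p := p) j l = z := by
  funext i k
  haveI : NeZero (p ^ n i) := ⟨(pow_pos (Nat.lt_of_lt_of_le Nat.zero_lt_one hp.le) _).ne'⟩
  rw [Finset.sum_apply, Finset.sum_apply]
  rw [Fintype.sum_eq_single i (fun j hj => ?_)]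
  · rw [Finset.sum_apply, Finset.sum_apply]
    rw [Fintype.sum_eq_single k (fun l hl => ?_)]
    · rw [Pi.smul_apply, Pi.smul_apply, gen, genc_same, nsmul_eq_mul, mul_one,
        ZMod.natCast_val, ZMod.cast_id]
    · rw [Pi.smul_apply, Pi.smul_apply, gen, genc_ne_coord (Ne.symm hl), smul_zero]
  · rw [Finset.sum_apply, Finset.sum_apply]
    refine Finset.sum_eq_zero fun l _ => ?_
    rw [Pi.smul_apply, Pi.smul_apply, gen, genc_ne_block (Ne.symm hj), smul_zero]

lemma ext_gen (hp : 1 < p) (hn : ∀ i, 0 < n i) {f g : Module.End ℤ (MM p s n r)}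
    (h : ∀ j l, f (gen j l) = g (gen j l)) : f = g := by
  refine LinearMap.ext fun z => ?_
  rw [← sum_gen hp hn z, map_sum, map_sum]
  refine Finset.sum_congr rfl fun j _ => ?_
  rw [map_sum, map_sum]
  refine Finset.sum_congr rfl fun l _ => ?_
  rw [map_nsmul, map_nsmul, h]

section RingLemmas
variable {R : Type*} [Ring R]

lemma memJ_of_forall_unit {x : R} (h : ∀ y, IsUnit (y * x + 1)) :
    x ∈ TwoSidedIdeal.jacobson (⊥ : TwoSidedIdeal R) := by
  rw [TwoSidedIdeal.mem_jacobson_iff]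
  intro y
  obtain ⟨u, hu⟩ := h y
  refine ⟨↑u⁻¹, ?_⟩
  rw [TwoSidedIdeal.mem_bot]
  have h1 : (↑u⁻¹ : R) * (y * x + 1) = 1 := by rw [← hu]; exact u.inv_mul
  rw [mul_add, mul_one, ← mul_assoc] at h1
  rw [sub_eq_zero, h1]

lemma exists_left_inv_of_memJ {x : R}
    (hx : x ∈ TwoSidedIdeal.jacobson (⊥ : TwoSidedIdeal R)) (y : R) :
    ∃ z, z * (y * x + 1) = 1 := by
  rw [TwoSidedIdeal.mem_jacobson_iff] at hx
  obtain ⟨z, hz⟩ := hx y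
  rw [TwoSidedIdeal.mem_bot, sub_eq_zero] at hz
  exact ⟨z, by rw [mul_add, mul_one, ← mul_assoc, hz]⟩

end RingLemmas

section EndLemmas

/-- injectivity from trivial kernel -/
lemma inj_of_ker {f : Module.End ℤ (MM p s n r)} (h : ∀ z, f z = 0 → z = 0) :
    Function.Injective f := fun a b hab =>
  sub_eq_zero.mp (h _ (by rw [map_sub, hab, sub_self]))

lemma isUnit_of_inj (hp : 1 < p) {f : Module.End ℤ (MM p s n r)}
    (hf : Function.Injective f) : IsUnit f := by
  haveI : ∀ i : Fin (s + 1), NeZero (p ^ n i) :=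
    fun i => ⟨(pow_pos (Nat.lt_of_lt_of_le Nat.zero_lt_one hp.le) _).ne'⟩
  haveI : Finite (MM p s n r) := by unfold MM; infer_instance
  rw [Module.End.isUnit_iff]
  exact Finite.injective_iff_bijective.mp hf

lemma inj_of_memJ {x : Module.End ℤ (MM p s n r)}
    (hx : x ∈ TwoSidedIdeal.jacobson (⊥ : TwoSidedIdeal (Module.End ℤ (MM p s n r))))
    (y : Module.End ℤ (MM p s n r)) : Function.Injective ⇑(y * x + 1) := by
  obtain ⟨z, hz⟩ := exists_left_inv_of_memJ hx y
  intro a b hab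
  have ha : z ((y * x + 1) a) = a := by rw [← Module.End.mul_apply, hz, Module.End.one_apply]
  have hb : z ((y * x + 1) b) = b := by rw [← Module.End.mul_apply, hz, Module.End.one_apply]
  rw [← ha, ← hb, hab]

lemma isUnit_one_add_of_memJ (hp : 1 < p) {x : Module.End ℤ (MM p s n r)}
    (hx : x ∈ TwoSidedIdeal.jacobson (⊥ : TwoSidedIdeal (Module.End ℤ (MM p s n r)))) :
    IsUnit (1 + x) := by
  have h := inj_of_memJ hx 1
  rw [one_mul] at h
  have := isUnit_of_inj hp h
  have e : x + 1 = 1 + x := add_comm _ _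
  rwa [e] at this

/-- `p • f` is in the radical. -/
lemma psmul_memJ (hp : 1 < p) (hmono : StrictMono n) (f : Module.End ℤ (MM p s n r)) :
    (p • f) ∈ TwoSidedIdeal.jacobson (⊥ : TwoSidedIdeal (Module.End ℤ (MM p s n r))) := by
  apply memJ_of_forall_unit
  intro y
  apply isUnit_of_inj hp
  apply inj_of_ker
  intro z hz
  have h0 : y * (p • f) = p • (y * f) := mul_smul_comm p y f
  rw [h0, LinearMap.add_apply, Module.End.one_apply, LinearMap.smul_apply] at hz
  set h : Module.End ℤ (MM p s n r) := -(y * f) with hh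
  have hz' : z = p • (h z) := by
    have h2 := eq_neg_of_add_eq_zero_right hz
    have e : p • (h z) = -(p • ((y * f) z)) := by
      rw [hh, LinearMap.neg_apply, smul_neg]
    rw [e]
    exact h2
  have claim : ∀ t : ℕ, z = (p ^ t : ℕ) • ((h ^ t) z) := by
    intro t
    induction t with
    | zero => simp
    | succ t ih =>
      have e1 : (h ^ t) z = (p : ℕ) • ((h ^ (t + 1)) z) := by
        conv_lhs => rw [hz']
        rw [map_nsmul, pow_succ, Module.End.mul_apply]
      calc z = (p ^ t : ℕ) • ((h ^ t) z) := ih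
        _ = (p ^ t : ℕ) • ((p : ℕ) • ((h ^ (t + 1)) z)) := by rw [e1]
        _ = (p ^ (t + 1) : ℕ) • ((h ^ (t + 1)) z) := by rw [smul_smul, ← pow_succ]
  have := claim (n (Fin.last s))
  rw [exp_smul hmono] at this
  exact this

/-- divisibility extraction in `ZMod (p ^ m)` -/
lemma dvd_of_pow_smul_eq_zero (hp : 1 < p) {m t : ℕ} (ht : t ≤ m) {c : ZMod (p ^ m)}
    (h : (p ^ t : ℕ) • c = 0) :
    ∃ d, c = ((p ^ (m - t) : ℕ) : ZMod (p ^ m)) * d := by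
  have hppos : 0 < p := Nat.lt_of_lt_of_le Nat.zero_lt_one hp.le
  haveI : NeZero (p ^ m) := ⟨(pow_pos hppos _).ne'⟩
  have h2 : ((p ^ t * c.val : ℕ) : ZMod (p ^ m)) = 0 := by
    rw [Nat.cast_mul, ZMod.natCast_val, ZMod.cast_id, ← nsmul_eq_mul, h]
  rw [ZMod.natCast_eq_zero_iff] at h2
  have hsplit : (p : ℕ) ^ m = p ^ t * p ^ (m - t) := by
    rw [← pow_add, Nat.add_sub_cancel' ht]
  have h2' : p ^ t * p ^ (m - t) ∣ p ^ t * c.val := by rw [← hsplit]; exact h2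
  have h3 : (p : ℕ) ^ (m - t) ∣ c.val :=
    (mul_dvd_mul_iff_left (pow_ne_zero t hppos.ne')).mp h2'
  obtain ⟨e, he⟩ := h3
  refine ⟨(e : ZMod (p ^ m)), ?_⟩
  rw [← Nat.cast_mul, ← he, ZMod.natCast_val, ZMod.cast_id]

lemma p_dvd_of_pow_dvd (hp : 1 < p) {m d : ℕ} (hd : 1 ≤ d) {c : ZMod (p ^ m)}
    (h : ∃ e, c = ((p ^ d : ℕ) : ZMod (p ^ m)) * e) :
    ∃ e, c = (p : ZMod (p ^ m)) * e := by
  obtain ⟨e, he⟩ := h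
  refine ⟨((p ^ (d - 1) : ℕ) : ZMod (p ^ m)) * e, ?_⟩
  rw [he, ← mul_assoc]
  congr 1
  have hnat : (p : ℕ) ^ d = p * p ^ (d - 1) := by
    rw [← pow_succ', Nat.sub_add_cancel hd]
  rw [hnat, Nat.cast_mul]

/-- cross elementary maps lie in the radical -/
lemma cross_memJ (hp : 1 < p) (hn : ∀ i, 0 < n i) (hmono : StrictMono n)
    {i j : Fin (s + 1)} (hij : i ≠ j) (k : Fin (r i)) (l : Fin (r j)) (c : ZMod (p ^ n i))
    (hc : ∃ c', c = ((p ^ (n i - n j) : ℕ) : ZMod (p ^ n i)) * c')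
    (hw : (p ^ n j : ℕ) • (genc (p := p) (s := s) (n := n) (r := r) i k c) = 0) :
    readSmul hp j l (genc i k c) hw ∈
      TwoSidedIdeal.jacobson (⊥ : TwoSidedIdeal (Module.End ℤ (MM p s n r))) := by
  haveI : ∀ i' : Fin (s + 1), NeZero (p ^ n i') :=
    fun i' => ⟨(pow_pos (Nat.lt_of_lt_of_le Nat.zero_lt_one hp.le) _).ne'⟩
  apply memJ_of_forall_unit
  intro y
  apply isUnit_of_inj hp
  apply inj_of_ker
  intro z hz
  set T := readSmul hp j l (genc i k c) hw with hT
  set w : MM p s n r := genc i k c with hwdef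
  set lam : ZMod (p ^ n j) := (y w) j l with hlam
  -- p divides lam
  have hplam : ∃ lam', lam = (p : ZMod (p ^ n j)) * lam' := by
    rcases hij.lt_or_gt with hlt | hlt
    · -- i < j : use torsion of w
      have h1 : (p ^ n i : ℕ) • w = 0 := qsmul_genc i k c
      have h2 : (p ^ n i : ℕ) • (y w) = 0 := by rw [← map_nsmul, h1, map_zero]
      have h3 : (p ^ n i : ℕ) • lam = 0 := by
        rw [hlam]
        calc (p ^ n i : ℕ) • ((y w) j l) = ((p ^ n i : ℕ) • (y w)) j l := rfl
          _ = 0 := by rw [h2]; rfl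
      have h4 := dvd_of_pow_smul_eq_zero hp (hmono hlt).le h3
      exact p_dvd_of_pow_dvd hp (Nat.one_le_iff_ne_zero.mpr
        (Nat.sub_ne_zero_of_lt (hmono hlt))) h4
    · -- j < i : c is divisible by p
      obtain ⟨c', hc'⟩ := hc
      have hd : 1 ≤ n i - n j := Nat.one_le_iff_ne_zero.mpr (Nat.sub_ne_zero_of_lt (hmono hlt))
      obtain ⟨e, he⟩ := p_dvd_of_pow_dvd hp hd ⟨c', hc'⟩
      -- w = p • w'
      have hwp : w = (p : ℕ) • genc i k e := by
        rw [hwdef, he]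
        have : genc (p := p) (s := s) (n := n) (r := r) i k ((p : ℕ) • e)
            = (p : ℕ) • genc i k e := by
          unfold genc
          rw [Pi.single_smul, Pi.single_smul]
        rw [← this, nsmul_eq_mul]
      refine ⟨(y (genc i k e)) j l, ?_⟩
      rw [hlam, hwp, map_nsmul]
      calc ((p : ℕ) • (y (genc i k e))) j l = (p : ℕ) • ((y (genc i k e)) j l) := rfl
        _ = (p : ZMod (p ^ n j)) * ((y (genc i k e)) j l) := by rw [nsmul_eq_mul]
  -- main computation
  have hTz : T z = (z j l).val • w := rfl
  have hzeq : z = -((z j l).val • (y w)) := by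
    have h1 : y (T z) + z = 0 := by
      rw [LinearMap.add_apply, Module.End.mul_apply, Module.End.one_apply] at hz
      exact hz
    rw [hTz, map_nsmul] at h1
    exact eq_neg_of_add_eq_zero_right h1
  have hcoord : z j l = -((z j l) * lam) := by
    conv_lhs => rw [hzeq]
    rw [Pi.neg_apply, Pi.neg_apply]
    rw [show (((z j l).val • (y w)) j l : ZMod (p ^ n j)) = (z j l).val • ((y w) j l) from rfl,
      nsmul_eq_mul, ZMod.natCast_val, ZMod.cast_id, hlam]
  have hxieq : z j l = (z j l) * (-lam) := by
    rw [mul_neg]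
    exact hcoord
  have hpow : ∀ t : ℕ, z j l = (z j l) * (-lam) ^ t := by
    intro t
    induction t with
    | zero => rw [pow_zero, mul_one]
    | succ t ih =>
      calc z j l = (z j l) * (-lam) ^ t := ih
        _ = ((z j l) * (-lam)) * (-lam) ^ t := by rw [← hxieq]
        _ = (z j l) * (-lam) ^ (t + 1) := by rw [mul_assoc, ← pow_succ']
  have hlamzero : (-lam) ^ (n j) = 0 := by
    obtain ⟨lam', hl⟩ := hplam
    rw [hl, neg_mul_eq_mul_neg, mul_comm, mul_pow]
    have : (p : ZMod (p ^ n j)) ^ (n j) = 0 := by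
      rw [← Nat.cast_pow, ZMod.natCast_self]
    rw [this, mul_zero]
  have hxizero : z j l = 0 := by
    have := hpow (n j)
    rw [hlamzero, mul_zero] at this
    exact this
  calc z = -((z j l).val • (y w)) := hzeq
    _ = 0 := by rw [hxizero, ZMod.val_zero, zero_nsmul, neg_zero]

lemma nsmul_genc (t : ℕ) (j : Fin (s + 1)) (l : Fin (r j)) (c : ZMod (p ^ n j)) :
    t • genc (p := p) (s := s) (n := n) (r := r) j l c = genc j l (t • c) := by
  unfold genc
  rw [Pi.single_smul, Pi.single_smul]

lemma genc_add (j : Fin (s + 1)) (l : Fin (r j)) (c c' : ZMod (p ^ n j)) :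
    genc (p := p) (s := s) (n := n) (r := r) j l (c + c') = genc j l c + genc j l c' := by
  unfold genc
  rw [Pi.single_add, Pi.single_add]

lemma genc_zero (j : Fin (s + 1)) (l : Fin (r j)) :
    genc (p := p) (s := s) (n := n) (r := r) j l 0 = 0 := by
  unfold genc
  rw [Pi.single_zero, Pi.single_zero]

/-- diagonal block `s` entries of a radical element are divisible by `p` -/
lemma topdvd (hpp : p.Prime) (hn : ∀ i, 0 < n i) {b : Module.End ℤ (MM p s n r)}
    (hb : b ∈ TwoSidedIdeal.jacobson (⊥ : TwoSidedIdeal (Module.End ℤ (MM p s n r))))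
    (k l : Fin (r (Fin.last s))) :
    (p : ZMod (p ^ n (Fin.last s))) ∣ (b (gen (Fin.last s) l)) (Fin.last s) k := by
  have hp : 1 < p := hpp.one_lt
  haveI : ∀ i' : Fin (s + 1), NeZero (p ^ n i') :=
    fun i' => ⟨(pow_pos (Nat.lt_of_lt_of_le Nat.zero_lt_one hp.le) _).ne'⟩
  set c0 : ZMod (p ^ n (Fin.last s)) := (b (gen (Fin.last s) l)) (Fin.last s) k with hc0
  by_cases hdvd : p ∣ c0.val
  · obtain ⟨t, ht⟩ := hdvd
    refine dvd_def.mpr ⟨(t : ZMod (p ^ n (Fin.last s))), ?_⟩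
    rw [← Nat.cast_mul, ← ht, ZMod.natCast_val, ZMod.cast_id]
  · exfalso
    have hco : Nat.Coprime c0.val (p ^ n (Fin.last s)) :=
      Nat.Coprime.pow_right _ (Nat.Coprime.symm (hpp.coprime_iff_not_dvd.mpr hdvd))
    have hunit : IsUnit c0 := by
      have h1 : IsUnit ((c0.val : ℕ) : ZMod (p ^ n (Fin.last s))) :=
        (ZMod.isUnit_iff_coprime c0.val (p ^ n (Fin.last s))).mpr hco
      rwa [ZMod.natCast_val, ZMod.cast_id] at h1
    obtain ⟨uu, huu⟩ := hunit
    set cneg : ZMod (p ^ n (Fin.last s)) := -(↑uu⁻¹) with hcneg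
    set y := readSmul hp (Fin.last s) k (genc (Fin.last s) l cneg)
      (qsmul_genc (Fin.last s) l cneg) with hy
    have hinj : Function.Injective ⇑(y * b + 1) := inj_of_memJ hb y
    have heval : (y * b + 1) (gen (Fin.last s) l) = 0 := by
      rw [LinearMap.add_apply, Module.End.mul_apply, Module.End.one_apply]
      have h2 : y (b (gen (Fin.last s) l)) = genc (Fin.last s) l (-1) := by
        rw [hy, readSmul_apply, ← hc0, nsmul_genc]
        congr 1
        rw [nsmul_eq_mul, ZMod.natCast_val, ZMod.cast_id, hcneg, mul_neg, ← huu,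
          Units.mul_inv]
      rw [h2, gen, ← genc_add, neg_add_cancel, genc_zero]
    have hz : gen (p := p) (s := s) (n := n) (r := r) (Fin.last s) l = 0 := by
      apply hinj
      rw [heval, map_zero]
    have h1 : (1 : ZMod (p ^ n (Fin.last s))) = 0 := by
      have := congrFun (congrFun hz (Fin.last s)) l
      rwa [gen, genc_same] at this
    haveI : Fact (1 < p ^ n (Fin.last s)) := ⟨Nat.one_lt_pow (hn _).ne' hp⟩
    exact one_ne_zero h1

/-- all top-block coordinates of `b w` are divisible by `p`, for `b` in the radical -/
lemma topdvd' (hpp : p.Prime) (hn : ∀ i, 0 < n i) (hmono : StrictMono n)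
    {b : Module.End ℤ (MM p s n r)}
    (hb : b ∈ TwoSidedIdeal.jacobson (⊥ : TwoSidedIdeal (Module.End ℤ (MM p s n r))))
    (w : MM p s n r) (k : Fin (r (Fin.last s))) :
    (p : ZMod (p ^ n (Fin.last s))) ∣ (b w) (Fin.last s) k := by
  have hp : 1 < p := hpp.one_lt
  rw [← sum_gen hp hn w, map_sum]
  rw [Finset.sum_apply, Finset.sum_apply]
  refine Finset.dvd_sum fun j _ => ?_
  rw [map_sum, Finset.sum_apply, Finset.sum_apply]
  refine Finset.dvd_sum fun l _ => ?_
  rw [map_nsmul]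
  have hcm : (((w j l).val • (b (gen j l))) (Fin.last s) k : ZMod (p ^ n (Fin.last s)))
      = ((w j l).val : ZMod (p ^ n (Fin.last s))) * ((b (gen j l)) (Fin.last s) k) := by
    rw [show (((w j l).val • (b (gen j l))) (Fin.last s) k : ZMod (p ^ n (Fin.last s)))
      = (w j l).val • ((b (gen j l)) (Fin.last s) k) from rfl, nsmul_eq_mul]
  rw [hcm]
  apply Dvd.dvd.mul_left
  rcases eq_or_ne j (Fin.last s) with rfl | hj
  · exact topdvd hpp hn hb k l
  · have h1 : (p ^ n j : ℕ) • (b (gen j l)) = 0 := qsmul_apply b j l 1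
    have h2 : (p ^ n j : ℕ) • ((b (gen j l)) (Fin.last s) k) = 0 := by
      calc (p ^ n j : ℕ) • ((b (gen j l)) (Fin.last s) k)
          = ((p ^ n j : ℕ) • (b (gen j l))) (Fin.last s) k := rfl
        _ = 0 := by rw [h1]; rfl
    have hlt : n j < n (Fin.last s) := hmono (lt_of_le_of_ne (Fin.le_last j) hj)
    obtain ⟨d, hd⟩ := dvd_of_pow_smul_eq_zero hp hlt.le h2
    obtain ⟨e, he⟩ := p_dvd_of_pow_dvd hp
      (Nat.one_le_iff_ne_zero.mpr (Nat.sub_ne_zero_of_lt hlt)) ⟨d, hd⟩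
    exact dvd_def.mpr ⟨e, he⟩

/-- KEY: `p ^ (n_s - 1)` kills every element of the radical -/
lemma key1 (hpp : p.Prime) (hn : ∀ i, 0 < n i) (hmono : StrictMono n)
    {b : Module.End ℤ (MM p s n r)}
    (hb : b ∈ TwoSidedIdeal.jacobson (⊥ : TwoSidedIdeal (Module.End ℤ (MM p s n r)))) :
    (p ^ (n (Fin.last s) - 1) : ℕ) • b = 0 := by
  have hp : 1 < p := hpp.one_lt
  refine LinearMap.ext fun z => ?_
  rw [LinearMap.smul_apply, LinearMap.zero_apply]
  funext i k
  rw [show (((p ^ (n (Fin.last s) - 1) : ℕ) • (b z)) i k : ZMod (p ^ n i))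
      = (p ^ (n (Fin.last s) - 1) : ℕ) • ((b z) i k) from rfl, nsmul_eq_mul]
  rcases eq_or_ne i (Fin.last s) with rfl | hi
  · obtain ⟨d, hd⟩ := dvd_def.mp (topdvd' hpp hn hmono hb z k)
    rw [hd, ← mul_assoc, ← Nat.cast_mul, ← pow_succ,
      Nat.sub_add_cancel (hn _), ZMod.natCast_self, zero_mul]
    rfl
  · have hlt : n i < n (Fin.last s) := hmono (lt_of_le_of_ne (Fin.le_last i) hi)
    have h0 : ((p ^ (n (Fin.last s) - 1) : ℕ) : ZMod (p ^ n i)) = 0 := by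
      rw [ZMod.natCast_eq_zero_iff]
      exact pow_dvd_pow _ (Nat.le_sub_one_of_lt hlt)
    rw [h0, zero_mul]
    rfl

/-- Structure of elements of `J` centralizing `J`. -/
lemma structure_thm (hpp : p.Prime) (hn : ∀ i, 0 < n i) (hmono : StrictMono n)
    (hr : ∀ i, 0 < r i) {A : Module.End ℤ (MM p s n r)}
    (hAJ : A ∈ TwoSidedIdeal.jacobson (⊥ : TwoSidedIdeal (Module.End ℤ (MM p s n r))))
    (hA : ∀ b ∈ TwoSidedIdeal.jacobson (⊥ : TwoSidedIdeal (Module.End ℤ (MM p s n r))),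
      A * b = b * A) :
    ∃ (m : ℕ) (a₀ : Module.End ℤ (MM p s n r)), p ∣ m ∧
      A = m • (1 : Module.End ℤ (MM p s n r)) + (p ^ (n (Fin.last s) - 1) : ℕ) • a₀ ∧
      (p ^ (n (Fin.last s)) : ℕ) • a₀ = 0 := by
  have hp : 1 < p := hpp.one_lt
  haveI : ∀ i' : Fin (s + 1), NeZero (p ^ n i') :=
    fun i' => ⟨(pow_pos (Nat.lt_of_lt_of_le Nat.zero_lt_one hp.le) _).ne'⟩
  set l₀ : Fin (r (Fin.last s)) := ⟨0, hr _⟩ with hl₀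
  set d₀ : ZMod (p ^ n (Fin.last s)) := (A (gen (Fin.last s) l₀)) (Fin.last s) l₀ with hd₀
  -- R1 : columns outside the last block
  have hR1 : ∀ (i : Fin (s + 1)), i ≠ Fin.last s → ∀ (k : Fin (r i)),
      A (gen i k) = d₀.val • gen (p := p) i k := by
    intro i hi k
    have hile : i < Fin.last s := lt_of_le_of_ne (Fin.le_last i) hi
    set B := readSmul hp (Fin.last s) l₀ (gen i k) (exp_smul hmono _) with hB
    have hBJ : B ∈ TwoSidedIdeal.jacobson (⊥ : TwoSidedIdeal (Module.End ℤ (MM p s n r))) := by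
      have h1 := cross_memJ hp hn hmono hi k l₀ (1 : ZMod (p ^ n i))
        ⟨1, by rw [mul_one, Nat.sub_eq_zero_of_le (hmono hile).le, pow_zero, Nat.cast_one]⟩
        (exp_smul hmono _)
      exact h1
    have hcomm := hA B hBJ
    have heq := congrArg (fun f => f (gen (Fin.last s) l₀)) hcomm
    simp only [Module.End.mul_apply] at heq
    rw [hB, readSmul_gen_same hp hn, readSmul_apply, ← hd₀] at heq
    exact heq
  -- R2 : block components outside the last block, of last-block columns
  have hR2 : ∀ (j : Fin (s + 1)), j ≠ Fin.last s → ∀ (l : Fin (r j)) (l' : Fin (r (Fin.last s))),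
      (A (gen (Fin.last s) l')) j l = 0 := by
    intro j hj l l'
    have hjle : j < Fin.last s := lt_of_le_of_ne (Fin.le_last j) hj
    have hle : n j ≤ n (Fin.last s) := (hmono hjle).le
    set c : ZMod (p ^ n (Fin.last s)) :=
      ((p ^ (n (Fin.last s) - n j) : ℕ) : ZMod (p ^ n (Fin.last s))) with hc
    have htor : (p ^ n j : ℕ) •
        (genc (p := p) (s := s) (n := n) (r := r) (Fin.last s) l₀ c) = 0 := by
      rw [nsmul_genc]
      have h1 : (p ^ n j : ℕ) • c = 0 := by
        rw [hc, nsmul_eq_mul, ← Nat.cast_mul, ← pow_add,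
          Nat.add_sub_cancel' hle, ZMod.natCast_self]
      rw [h1, genc_zero]
    set T := readSmul hp j l (genc (Fin.last s) l₀ c) htor with hT
    have hTJ : T ∈ TwoSidedIdeal.jacobson (⊥ : TwoSidedIdeal (Module.End ℤ (MM p s n r))) :=
      cross_memJ hp hn hmono (Ne.symm hj) l₀ l c ⟨1, by rw [mul_one]⟩ htor
    have hcomm := hA T hTJ
    have heq := congrArg (fun f => f (gen (Fin.last s) l')) hcomm
    simp only [Module.End.mul_apply] at heq
    rw [hT, readSmul_gen_ne_block hp j l _ htor l' (Ne.symm hj), map_zero, readSmul_apply] at heq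
    -- heq : 0 = val • genc (Fin.last s) l₀ c
    have hcoord := congrFun (congrFun heq.symm (Fin.last s)) l₀
    rw [show ((((A (gen (Fin.last s) l')) j l).val •
        genc (p := p) (s := s) (n := n) (r := r) (Fin.last s) l₀ c) (Fin.last s) l₀
        : ZMod (p ^ n (Fin.last s)))
      = ((A (gen (Fin.last s) l')) j l).val •
        ((genc (p := p) (s := s) (n := n) (r := r) (Fin.last s) l₀ c) (Fin.last s) l₀) from rfl,
      genc_same, hc, nsmul_eq_mul, ← Nat.cast_mul] at hcoord
    rw [show ((0 : MM p s n r) (Fin.last s) l₀ : ZMod (p ^ n (Fin.last s))) = 0 from rfl]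
      at hcoord
    have hdvd : (p : ℕ) ^ n (Fin.last s) ∣
        ((A (gen (Fin.last s) l')) j l).val * p ^ (n (Fin.last s) - n j) := by
      rw [← ZMod.natCast_eq_zero_iff]
      exact hcoord
    have hsplit : (p : ℕ) ^ n (Fin.last s) = p ^ n j * p ^ (n (Fin.last s) - n j) := by
      rw [← pow_add, Nat.add_sub_cancel' hle]
    rw [hsplit] at hdvd
    have h2 : (p : ℕ) ^ n j ∣ ((A (gen (Fin.last s) l')) j l).val := by
      have hne : (p : ℕ) ^ (n (Fin.last s) - n j) ≠ 0 :=
        pow_ne_zero _ (Nat.lt_of_lt_of_le Nat.zero_lt_one hp.le).ne'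
      exact (mul_dvd_mul_iff_right hne).mp hdvd
    obtain ⟨t, ht⟩ := h2
    have : (A (gen (Fin.last s) l')) j l = (((p : ℕ) ^ n j * t : ℕ) : ZMod (p ^ n j)) := by
      rw [← ht, ZMod.natCast_val, ZMod.cast_id]
    rw [this, Nat.cast_mul, Nat.cast_pow, ← Nat.cast_pow, ZMod.natCast_self, zero_mul]
  -- R3 : last block congruences
  have hR3 : ∀ (l k : Fin (r (Fin.last s))), ∃ δ : ZMod (p ^ n (Fin.last s)),
      (A (gen (Fin.last s) l)) (Fin.last s) k
        = d₀.val • ((gen (p := p) (s := s) (n := n) (r := r) (Fin.last s) l) (Fin.last s) k)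
          + ((p ^ (n (Fin.last s) - 1) : ℕ) : ZMod (p ^ n (Fin.last s))) * δ := by
    intro l k
    set E := readSmul hp (Fin.last s) l₀ (gen (Fin.last s) l) (exp_smul hmono _) with hE
    have hcomm := hA (p • E) (psmul_memJ hp hmono E)
    have heq := congrArg (fun f => f (gen (Fin.last s) l₀)) hcomm
    simp only [Module.End.mul_apply, LinearMap.smul_apply] at heq
    rw [hE, readSmul_gen_same hp hn, readSmul_apply, ← hd₀, map_nsmul] at heq
    -- heq : p • A (gen (Fin.last s) l) = p • (d₀.val • gen (Fin.last s) l)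
    have hcoord := congrFun (congrFun heq (Fin.last s)) k
    have hzero : (p : ℕ) • ((A (gen (Fin.last s) l)) (Fin.last s) k
        - d₀.val • ((gen (p := p) (s := s) (n := n) (r := r)
            (Fin.last s) l) (Fin.last s) k)) = 0 := by
      rw [smul_sub]
      rw [show (((p : ℕ) • A (gen (Fin.last s) l)) (Fin.last s) k : ZMod (p ^ n (Fin.last s)))
        = (p : ℕ) • ((A (gen (Fin.last s) l)) (Fin.last s) k) from rfl] at hcoord
      rw [show (((p : ℕ) • (d₀.val • gen (p := p) (s := s) (n := n) (r := r) (Fin.last s) l))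
          (Fin.last s) k : ZMod (p ^ n (Fin.last s)))
        = (p : ℕ) • (d₀.val • ((gen (p := p) (s := s) (n := n) (r := r)
            (Fin.last s) l) (Fin.last s) k)) from rfl] at hcoord
      rw [hcoord, sub_self]
    have h1 : ((p : ℕ) ^ 1) • ((A (gen (Fin.last s) l)) (Fin.last s) k
        - d₀.val • ((gen (p := p) (s := s) (n := n) (r := r)
            (Fin.last s) l) (Fin.last s) k)) = 0 := by
      rwa [pow_one]
    obtain ⟨δ, hδ⟩ := dvd_of_pow_smul_eq_zero hp (hn (Fin.last s)) h1
    exact ⟨δ, by rw [← hδ]; ring⟩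
  choose β hβ using hR3
  -- the correction endomorphism
  set a₀ : Module.End ℤ (MM p s n r) := ∑ l : Fin (r (Fin.last s)),
    readSmul hp (Fin.last s) l (Pi.single (Fin.last s) (fun k => β l k)) (exp_smul hmono _)
    with ha₀
  refine ⟨d₀.val, a₀, ?_, ?_, ?_⟩
  · -- p ∣ m
    obtain ⟨dd, hdd⟩ := dvd_def.mp (topdvd hpp hn hAJ l₀ l₀)
    rw [← hd₀] at hdd
    have : d₀ = ((p * dd.val : ℕ) : ZMod (p ^ n (Fin.last s))) := by
      rw [hdd, Nat.cast_mul, ZMod.natCast_val, ZMod.cast_id]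
    rw [this, ZMod.val_natCast]
    exact (Nat.dvd_mod_iff (dvd_pow_self p (hn _).ne')).mpr ⟨dd.val, rfl⟩
  · -- the main identity, checked on generators
    apply ext_gen hp hn
    intro j l
    rw [LinearMap.add_apply, LinearMap.smul_apply, LinearMap.smul_apply, Module.End.one_apply]
    have ha₀app : ∀ z, a₀ z = ∑ l' : Fin (r (Fin.last s)),
        readSmul hp (Fin.last s) l' (Pi.single (Fin.last s) (fun k => β l' k))
          (exp_smul hmono _) z := by
      intro z
      rw [ha₀, LinearMap.sum_apply]
    rcases eq_or_ne j (Fin.last s) with rfl | hj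
    · -- last-block column
      have ha₀gen : a₀ (gen (Fin.last s) l) = Pi.single (Fin.last s) (fun k => β l k) := by
        rw [ha₀app]
        rw [Fintype.sum_eq_single l (fun l' hl' => ?_)]
        · rw [readSmul_gen_same hp hn]
        · rw [readSmul_gen_ne_coord hp _ _ _ _ (Ne.symm hl')]
      rw [ha₀gen]
      funext i k
      rw [Pi.add_apply, Pi.add_apply]
      rcases eq_or_ne i (Fin.last s) with rfl | hi
      · rw [hβ l k]
        congr 1
        rw [show (((p ^ (n (Fin.last s) - 1) : ℕ) •
            (Pi.single (Fin.last s) (fun k => β l k)) : MM p s n r) (Fin.last s) k)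
          = (p ^ (n (Fin.last s) - 1) : ℕ) •
            ((Pi.single (Fin.last s) (fun k => β l k) : MM p s n r) (Fin.last s) k) from rfl,
          Pi.single_eq_same, nsmul_eq_mul]
      · rw [hR2 i hi k l,
          show ((d₀.val • gen (p := p) (s := s) (n := n) (r := r) (Fin.last s) l) i k
            : ZMod (p ^ n i))
            = d₀.val • ((gen (p := p) (s := s) (n := n) (r := r) (Fin.last s) l) i k) from rfl,
          gen, genc_ne_block hi, smul_zero,
          show (((p ^ (n (Fin.last s) - 1) : ℕ) •
            (Pi.single (Fin.last s) (fun k => β l k)) : MM p s n r) i k)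
          = (p ^ (n (Fin.last s) - 1) : ℕ) •
            ((Pi.single (Fin.last s) (fun k => β l k) : MM p s n r) i k) from rfl,
          Pi.single_eq_of_ne hi, Pi.zero_apply, smul_zero, add_zero]
    · -- other columns
      have ha₀gen : a₀ (gen j l) = 0 := by
        rw [ha₀app]
        refine Finset.sum_eq_zero fun l' _ => ?_
        rw [readSmul_gen_ne_block hp _ _ _ _ _ hj]
      rw [ha₀gen, smul_zero, add_zero, hR1 j hj l]
  · -- torsion of a₀
    refine LinearMap.ext fun z => ?_
    rw [LinearMap.smul_apply, LinearMap.zero_apply]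
    exact exp_smul hmono _

end EndLemmas

end Stmt17Aux

/-- An element `u = A + 1` of `Δ(G) = 1 + J` lies in the center of `Δ(G)` if and only if
it belongs to `(Ann(J) + 1)·(Z(End G) ∩ Δ(G))`, i.e. `u = (1 + a)z` with `a ∈ Ann(J)` and
`z` a central unit with `z − 1 ∈ J`. Here `J` is the Jacobson radical of `End(G)`. -/
theorem stmt17 (p : ℕ) (hp : p.Prime) (s : ℕ) (n : Fin (s + 1) → ℕ)
    (hpos : 0 < n 0) (hmono : StrictMono n)
    (r : Fin (s + 1) → ℕ) (hr : ∀ i, 0 < r i)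
    (u : (Module.End ℤ (∀ i : Fin (s + 1), Fin (r i) → ZMod (p ^ n i)))ˣ)
    (hu : ((u : Module.End ℤ (∀ i : Fin (s + 1), Fin (r i) → ZMod (p ^ n i))) - 1) ∈
      TwoSidedIdeal.jacobson
        (⊥ : TwoSidedIdeal (Module.End ℤ (∀ i : Fin (s + 1), Fin (r i) → ZMod (p ^ n i))))) :
    (∀ v : (Module.End ℤ (∀ i : Fin (s + 1), Fin (r i) → ZMod (p ^ n i)))ˣ,
      ((v : Module.End ℤ (∀ i : Fin (s + 1), Fin (r i) → ZMod (p ^ n i))) - 1) ∈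
        TwoSidedIdeal.jacobson
          (⊥ : TwoSidedIdeal (Module.End ℤ (∀ i : Fin (s + 1), Fin (r i) → ZMod (p ^ n i)))) →
      u * v = v * u) ↔
    (∃ a ∈ TwoSidedIdeal.jacobson
        (⊥ : TwoSidedIdeal (Module.End ℤ (∀ i : Fin (s + 1), Fin (r i) → ZMod (p ^ n i)))),
      (∀ b ∈ TwoSidedIdeal.jacobson
        (⊥ : TwoSidedIdeal (Module.End ℤ (∀ i : Fin (s + 1), Fin (r i) → ZMod (p ^ n i)))),
        a * b = 0 ∧ b * a = 0) ∧
      ∃ z : (Module.End ℤ (∀ i : Fin (s + 1), Fin (r i) → ZMod (p ^ n i)))ˣ,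
        ((z : Module.End ℤ (∀ i : Fin (s + 1), Fin (r i) → ZMod (p ^ n i))) ∈
          Set.center (Module.End ℤ (∀ i : Fin (s + 1), Fin (r i) → ZMod (p ^ n i)))) ∧
        ((z : Module.End ℤ (∀ i : Fin (s + 1), Fin (r i) → ZMod (p ^ n i))) - 1) ∈
          TwoSidedIdeal.jacobson
            (⊥ : TwoSidedIdeal (Module.End ℤ (∀ i : Fin (s + 1), Fin (r i) → ZMod (p ^ n i)))) ∧
        (u : Module.End ℤ (∀ i : Fin (s + 1), Fin (r i) → ZMod (p ^ n i))) = (1 + a) * z) := by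
  have hp1 : 1 < p := hp.one_lt
  have hn : ∀ i, 0 < n i := fun i => lt_of_lt_of_le hpos (hmono.monotone (Fin.zero_le i))
  constructor
  · -- forward direction
    intro hcomm
    set A : Module.End ℤ (∀ i : Fin (s + 1), Fin (r i) → ZMod (p ^ n i)) := ↑u - 1 with hA
    have hAb : ∀ b ∈ TwoSidedIdeal.jacobson
        (⊥ : TwoSidedIdeal (Module.End ℤ (∀ i : Fin (s + 1), Fin (r i) → ZMod (p ^ n i)))),
        A * b = b * A := by
      intro b hb
      have hvu : IsUnit (1 + b) := Stmt17Aux.isUnit_one_add_of_memJ hp1 hb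
      have hv1 : (hvu.unit : Module.End ℤ (∀ i : Fin (s + 1), Fin (r i) → ZMod (p ^ n i)))
          = 1 + b := hvu.unit_spec
      have hvmem : (hvu.unit : Module.End ℤ (∀ i : Fin (s + 1), Fin (r i) → ZMod (p ^ n i)))
          - 1 ∈ TwoSidedIdeal.jacobson ⊥ := by
        rw [hv1, add_sub_cancel_left]
        exact hb
      have h1 := hcomm hvu.unit hvmem
      have h2 := congrArg Units.val h1
      rw [Units.val_mul, Units.val_mul, hv1] at h2
      have h3 : (↑u : Module.End ℤ (∀ i : Fin (s + 1), Fin (r i) → ZMod (p ^ n i))) * b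
          = b * ↑u := by
        rw [mul_add, add_mul, mul_one, one_mul] at h2
        exact add_left_cancel h2
      rw [hA, sub_mul, mul_sub, one_mul, mul_one, h3]
    obtain ⟨m, a₀, hpm, hAeq, htor⟩ := Stmt17Aux.structure_thm hp hn hmono hr hu hAb
    obtain ⟨m', hm'⟩ := hpm
    have hm1 : (m • (1 : Module.End ℤ (∀ i : Fin (s + 1), Fin (r i) → ZMod (p ^ n i))))
        ∈ TwoSidedIdeal.jacobson ⊥ := by
      rw [hm', mul_smul]
      exact Stmt17Aux.psmul_memJ hp1 hmono (m' • 1)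
    set a : Module.End ℤ (∀ i : Fin (s + 1), Fin (r i) → ZMod (p ^ n i)) :=
      (p ^ (n (Fin.last s) - 1) : ℕ) • a₀ with ha
    have haA : a = A - m • 1 := by rw [hAeq]; abel
    have haJ : a ∈ TwoSidedIdeal.jacobson
        (⊥ : TwoSidedIdeal (Module.End ℤ (∀ i : Fin (s + 1), Fin (r i) → ZMod (p ^ n i)))) := by
      rw [haA]
      exact TwoSidedIdeal.sub_mem _ hu hm1
    have hma : a * (m • (1 : Module.End ℤ (∀ i : Fin (s + 1), Fin (r i) → ZMod (p ^ n i))))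
        = 0 := by
      rw [mul_smul_comm, mul_one, ha, smul_smul, hm', mul_comm p m', mul_assoc,
        ← pow_succ', Nat.sub_add_cancel (hn _), mul_smul, htor, smul_zero]
    refine ⟨a, haJ, ?_, ?_⟩
    · intro b hb
      have hkill := Stmt17Aux.key1 hp hn hmono hb
      constructor
      · rw [ha, smul_mul_assoc, ← mul_smul_comm, hkill, mul_zero]
      · rw [ha, mul_smul_comm, ← smul_mul_assoc, hkill, zero_mul]
    · have hzu : IsUnit (1 + m • (1 : Module.End ℤ (∀ i : Fin (s + 1),
          Fin (r i) → ZMod (p ^ n i)))) := Stmt17Aux.isUnit_one_add_of_memJ hp1 hm1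
      refine ⟨hzu.unit, ?_, ?_, ?_⟩
      · rw [Semigroup.mem_center_iff]
        intro g
        rw [hzu.unit_spec, mul_add, add_mul, mul_one, one_mul, mul_smul_comm,
          smul_mul_assoc, mul_one, one_mul]
      · rw [hzu.unit_spec, add_sub_cancel_left]
        exact hm1
      · rw [hzu.unit_spec]
        have hu1 : (↑u : Module.End ℤ (∀ i : Fin (s + 1), Fin (r i) → ZMod (p ^ n i)))
            = 1 + A := by rw [hA]; abel
        calc (↑u : Module.End ℤ (∀ i : Fin (s + 1), Fin (r i) → ZMod (p ^ n i)))
            = 1 + A := hu1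
          _ = 1 + m • 1 + a := by rw [hAeq]; abel
          _ = (1 + a) * (1 + m • 1) := by
              have hexp : (1 + a) * (1 + m • (1 : Module.End ℤ (∀ i : Fin (s + 1),
                  Fin (r i) → ZMod (p ^ n i)))) = 1 + m • 1 + a := by
                rw [mul_add, mul_one, add_mul, one_mul, hma, add_zero]
                abel
              rw [hexp]
  · -- reverse direction
    rintro ⟨a, haJ, hann, z, hzc, hzJ, hueq⟩
    intro v hv
    apply Units.ext
    rw [Units.val_mul, Units.val_mul, hueq]
    set b : Module.End ℤ (∀ i : Fin (s + 1), Fin (r i) → ZMod (p ^ n i)) := ↑v - 1 with hb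
    have hvb : (↑v : Module.End ℤ (∀ i : Fin (s + 1), Fin (r i) → ZMod (p ^ n i)))
        = 1 + b := by rw [hb]; abel
    obtain ⟨hab, hba⟩ := hann b hv
    have hzcomm : ∀ g, g * (↑z : Module.End ℤ (∀ i : Fin (s + 1), Fin (r i) → ZMod (p ^ n i)))
        = ↑z * g := fun g => (Semigroup.mem_center_iff.mp hzc) g
    calc (1 + a) * ↑z * ↑v = (1 + a) * (↑v * ↑z) := by rw [mul_assoc, ← hzcomm]
      _ = ((1 + a) * (1 + b)) * ↑z := by rw [hvb, mul_assoc]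
      _ = (1 + a + b) * ↑z := by
          have h4 : (1 + a) * (1 + b) = 1 + a + b := by
            rw [mul_add, mul_one, add_mul, one_mul, hab, add_zero]
          rw [h4]
      _ = ((1 + b) * (1 + a)) * ↑z := by
          have h5 : (1 + b) * (1 + a) = 1 + a + b := by
            rw [mul_add, mul_one, add_mul, one_mul, hba, add_zero]
            abel
          rw [h5]
      _ = ↑v * ((1 + a) * ↑z) := by rw [hvb, mul_assoc]
end

section
/- Let I be a two-sided ideal of a ring R with 1 + I ⊆ R^×, and suppose the upper annihilating sequence of I has finite length d (I_d = I, I_{d−1} ≠ I). If the nilpotency class of Γ = 1 + I is n, then n ≤ d. -/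
/-- The upper annihilating sequence of a set `I` in a ring. -/
def uasSet {R : Type*} [Ring R] (I : Set R) : ℕ → Set R
  | 0 => {0}
  | t + 1 => {a | a ∈ I ∧ ∀ b ∈ I, a * b ∈ uasSet I t ∧ b * a ∈ uasSet I t}

/-!
Each term `I_t` of the upper annihilating sequence is a two-sided ideal, and the congruence
subgroups `Γ_t = {u ∈ Rˣ | u - 1 ∈ I_t}` form an ascending central series of `Γ = 1 + I`:
writing `x = 1 + a`, `g = 1 + b`, one has `x g - g x = a b - b a`, so
`⁅x, g⁆ - 1 = (a b - b a) x⁻¹ g⁻¹`, which lies in `I_t` as soon as `a ∈ I_{t+1}` and `b ∈ I`.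
Since `Γ_d = Γ`, the upper central series of `Γ` reaches the top after at most `d` steps.
-/

open scoped commutatorElement

namespace TwoSidedIdeal

variable {R : Type*} [Ring R]

def relAnnihilator (I J : TwoSidedIdeal R) : TwoSidedIdeal R :=
  mk' {a | a ∈ I ∧ ∀ b ∈ I, a * b ∈ J ∧ b * a ∈ J}
    ⟨I.zero_mem, fun b _ => by simp [J.zero_mem]⟩
    (fun ⟨hxI, hx⟩ ⟨hyI, hy⟩ => ⟨I.add_mem hxI hyI, fun b hb => by
      rw [add_mul, mul_add]
      exact ⟨J.add_mem (hx b hb).1 (hy b hb).1, J.add_mem (hx b hb).2 (hy b hb).2⟩⟩)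
    (fun ⟨hxI, hx⟩ => ⟨I.neg_mem hxI, fun b hb => by
      rw [neg_mul, mul_neg]
      exact ⟨J.neg_mem (hx b hb).1, J.neg_mem (hx b hb).2⟩⟩)
    (fun {r x} ⟨hxI, hx⟩ => ⟨I.mul_mem_left r _ hxI, fun b hb => by
      rw [mul_assoc r, ← mul_assoc b]
      exact ⟨J.mul_mem_left r _ (hx b hb).1, (hx (b * r) (I.mul_mem_right b r hb)).2⟩⟩)
    (fun {x r} ⟨hxI, hx⟩ => ⟨I.mul_mem_right _ r hxI, fun b hb => by
      rw [mul_assoc x, ← mul_assoc b]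
      exact ⟨(hx (r * b) (I.mul_mem_left r b hb)).1, J.mul_mem_right _ r (hx b hb).2⟩⟩)

def uas (I : TwoSidedIdeal R) : ℕ → TwoSidedIdeal R
  | 0 => ⊥
  | t + 1 => I.relAnnihilator (I.uas t)

theorem coe_uas (I : TwoSidedIdeal R) (t : ℕ) : (I.uas t : Set R) = uasSet (I : Set R) t := by
  induction t with
  | zero => rfl
  | succ t ih =>
    ext a
    simp only [uas, relAnnihilator, coe_mk', uasSet, ← ih, SetLike.mem_coe, Set.mem_ofPred_eq]

/-- The group `Γ = (1 + I) ∩ Rˣ`, as the kernel of `Rˣ → (R ⧸ I)ˣ`. -/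
def oneAddUnits (I : TwoSidedIdeal R) : Subgroup Rˣ :=
  (Units.map (I.ringCon.mk' : R →* I.ringCon.Quotient)).ker

theorem mem_oneAddUnits {I : TwoSidedIdeal R} {u : Rˣ} :
    u ∈ I.oneAddUnits ↔ (u : R) - 1 ∈ I := by
  rw [oneAddUnits, MonoidHom.mem_ker, Units.ext_iff, Units.coe_map, Units.val_one,
    ← map_one (I.ringCon.mk' : R →* I.ringCon.Quotient)]
  exact (RingCon.eq _).trans (I.rel_iff _ _)

theorem oneAddUnits_bot : (⊥ : TwoSidedIdeal R).oneAddUnits = ⊥ := by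
  ext u
  rw [mem_oneAddUnits, mem_bot, sub_eq_zero, Subgroup.mem_bot, Units.ext_iff, Units.val_one]

theorem _root_.Units.val_commutatorElement_sub_one (x g : Rˣ) :
    ((⁅x, g⁆ : Rˣ) : R) - 1 =
      (((x : R) - 1) * ((g : R) - 1) - ((g : R) - 1) * ((x : R) - 1)) * ↑x⁻¹ * ↑g⁻¹ := by
  have hcomm : ((x : R) - 1) * ((g : R) - 1) - ((g : R) - 1) * ((x : R) - 1) =
      x * g - g * x := by noncomm_ring
  rw [hcomm, commutatorElement_def, sub_mul, sub_mul, mul_assoc (g : R), Units.mul_inv,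
    mul_one, Units.mul_inv]
  push_cast
  rfl

theorem commutatorElement_mem_oneAddUnits {I J : TwoSidedIdeal R} {x g : Rˣ}
    (hx : x ∈ (I.relAnnihilator J).oneAddUnits) (hg : g ∈ I.oneAddUnits) :
    ⁅x, g⁆ ∈ J.oneAddUnits := by
  rw [mem_oneAddUnits] at hx hg ⊢
  obtain ⟨-, hxJ⟩ := (mem_mk' _ _ _ _ _ _ _).mp hx
  rw [Units.val_commutatorElement_sub_one]
  exact J.mul_mem_right _ _ (J.mul_mem_right _ _ (J.sub_mem (hxJ _ hg).1 (hxJ _ hg).2))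

theorem isAscendingCentralSeries_oneAddUnits_uas (I : TwoSidedIdeal R) :
    Subgroup.IsAscendingCentralSeries
      fun t => (I.uas t).oneAddUnits.subgroupOf I.oneAddUnits := by
  refine ⟨by simp only [uas, oneAddUnits_bot, Subgroup.bot_subgroupOf], fun x t hx g => ?_⟩
  rw [Subgroup.mem_subgroupOf] at hx ⊢
  exact commutatorElement_mem_oneAddUnits hx g.2

end TwoSidedIdeal

open TwoSidedIdeal in
theorem stmt18_general {R : Type*} [Ring R] (I : TwoSidedIdeal R)
    (d : ℕ) (hd : uasSet (I : Set R) d = (I : Set R)) :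
    ∃ Γ : Subgroup Rˣ, (∀ u : Rˣ, u ∈ Γ ↔ (u : R) - 1 ∈ (I : Set R)) ∧
      ∃ hn : Group.IsNilpotent Γ, Group.nilpotencyClass Γ ≤ d := by
  refine ⟨I.oneAddUnits, fun u => mem_oneAddUnits, ?_⟩
  have huas : I.uas d = I := SetLike.coe_injective (by rw [coe_uas, hd])
  have hcentral : Subgroup.upperCentralSeries I.oneAddUnits d = ⊤ := by
    refine top_le_iff.mp ?_
    have hle := Subgroup.ascending_central_series_le_upper _
      I.isAscendingCentralSeries_oneAddUnits_uas d
    rwa [huas, Subgroup.subgroupOf_self] at hle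
  have hnil : Group.IsNilpotent I.oneAddUnits := ⟨d, hcentral⟩
  exact ⟨hnil, Subgroup.upperCentralSeries_eq_top_iff_nilpotencyClass_le.mp hcentral⟩

/-- If `1 + I ⊆ Rˣ` and the upper annihilating sequence of `I` has finite length `d`,
then `Γ = 1 + I` is a nilpotent group of nilpotency class at most `d`. -/
theorem stmt18 {R : Type*} [Ring R] (I : TwoSidedIdeal R)
    (hu : ∀ a ∈ (I : Set R), IsUnit (1 + a))
    (d : ℕ) (hd : uasSet (I : Set R) d = (I : Set R))
    (hd' : uasSet (I : Set R) (d - 1) ≠ (I : Set R)) :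
    ∃ Γ : Subgroup Rˣ, (∀ u : Rˣ, u ∈ Γ ↔ (u : R) - 1 ∈ (I : Set R)) ∧
      ∃ hn : Group.IsNilpotent Γ, Group.nilpotencyClass Γ ≤ d :=
  stmt18_general I d hd
end
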